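/- arXiv:1307.6085 — 7 statements merged into one kernel-verified Lean document; each statement's English description precedes it below -/
import Mathlib

section
/- Assume the standing algebra setup and assume additionally that b0 = a_p·a_q for some a_p ∈ m² ∩ H and a_q ∈ H. Let Q̃ be an H-invariant symmetric trilinear form on R and set A = Q̃(b0, 1, 1). Then for all a, a′, a″ ∈ m: Q̃(a, 1, 1) = A·y0(a), Q̃(a, a′, 1) = −(1/2)·A·y0(a·a′), and Q̃(a, a′, a″) = A·y0(a·a′·a″). -/
/-- In the standing algebra setup, if moreover `b0 = a_p * a_q` with
`a_p ∈ m² ∩ H` and `a_q ∈ H`, then any `H`-invariant symmetric trilinear form `Q̃` on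
`R` is determined on the maximal ideal by `A = Q̃(b0,1,1)` and `y0`:
`Q̃(a,1,1) = A·y0(a)`, `Q̃(a,a',1) = -(1/2)·A·y0(a·a')` and
`Q̃(a,a',a'') = A·y0(a·a'·a'')`. -/
theorem stmt3 (K : Type) [Field K] [CharZero K]
    (R : Type) [CommRing R] [Algebra K R] [IsLocalRing R] [Module.Finite K R]
    (H : Submodule K R)
    (hHm : H ≤ Submodule.restrictScalars K (IsLocalRing.maximalIdeal R))
    (b0 : R) (hb0 : b0 ∈ IsLocalRing.maximalIdeal R ^ 3)
    (hspan : Submodule.span K {(1 : R)} ⊔ H ⊔ Submodule.span K {b0} = ⊤)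
    (hindep : ∀ (c d : K) (h : R), h ∈ H → c • (1 : R) + h + d • b0 = 0 →
      c = 0 ∧ h = 0 ∧ d = 0)
    (y0 : R →ₗ[K] K) (hy0b0 : y0 b0 = 1) (hy0one : y0 1 = 0) (hy0H : ∀ h ∈ H, y0 h = 0)
    (hy0m4 : ∀ x ∈ IsLocalRing.maximalIdeal R ^ 4, y0 x = 0)
    (ap aq : R) (hap2 : ap ∈ IsLocalRing.maximalIdeal R ^ 2) (hapH : ap ∈ H)
    (haqH : aq ∈ H) (hb0eq : b0 = ap * aq)
    (T : R →ₗ[K] R →ₗ[K] R →ₗ[K] K)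
    (hTsymm12 : ∀ a b c : R, T a b c = T b a c)
    (hTsymm23 : ∀ a b c : R, T a b c = T a c b)
    (hTinv : ∀ a ∈ H, ∀ α β γ : R,
      T (a * α) β γ + T α (a * β) γ + T α β (a * γ) = 0)
    (A : K) (hA : A = T b0 1 1) :
    (∀ a ∈ IsLocalRing.maximalIdeal R, T a 1 1 = A * y0 a) ∧
    (∀ a ∈ IsLocalRing.maximalIdeal R, ∀ a' ∈ IsLocalRing.maximalIdeal R,
      T a a' 1 = -(1 / 2 : K) * A * y0 (a * a')) ∧
    (∀ a ∈ IsLocalRing.maximalIdeal R, ∀ a' ∈ IsLocalRing.maximalIdeal R,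
      ∀ a'' ∈ IsLocalRing.maximalIdeal R, T a a' a'' = A * y0 (a * a' * a'')) := by
  set m : Ideal R := IsLocalRing.maximalIdeal R with hmdef
  have hb0m : b0 ∈ m := Ideal.pow_le_self (by norm_num) hb0
  have hHmm : ∀ h ∈ H, h ∈ m := fun h hh => hHm hh
  have m4le : m ^ 4 ≤ m := Ideal.pow_le_self (by norm_num)
  have hmul4 : ∀ x ∈ m, b0 * x ∈ m ^ 4 := by
    intro x hx
    have h := Ideal.mul_mem_mul hb0 hx
    rwa [← pow_succ] at h
  have hap4 : ap * ap ∈ m ^ 4 := by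
    have h := Ideal.mul_mem_mul hap2 hap2
    rwa [← pow_add] at h
  have hy4 : ∀ x ∈ m, y0 (b0 * x) = 0 := fun x hx => hy0m4 _ (hmul4 x hx)
  -- decomposition of elements of m
  have decomp : ∀ x ∈ m, ∃ h ∈ H, ∃ d : K, x = h + d • b0 ∧ y0 x = d := by
    intro x hx
    have hx' : x ∈ Submodule.span K {(1 : R)} ⊔ H ⊔ Submodule.span K {b0} := by
      rw [hspan]; exact Submodule.mem_top
    rcases Submodule.mem_sup.mp hx' with ⟨s, hs, t, ht, hst⟩
    rcases Submodule.mem_sup.mp hs with ⟨u, hu, h, hh, huh⟩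
    rcases Submodule.mem_span_singleton.mp hu with ⟨c, rfl⟩
    rcases Submodule.mem_span_singleton.mp ht with ⟨d, rfl⟩
    have hxeq : x = c • (1 : R) + h + d • b0 := by rw [← hst, ← huh]
    have hcm : c • (1 : R) ∈ Submodule.restrictScalars K m := by
      have h1 : x - h - d • b0 = c • (1 : R) := by rw [hxeq]; abel
      rw [← h1]
      exact sub_mem (sub_mem hx (hHm hh)) (Submodule.smul_mem _ d hb0m)
    have hc0 : c = 0 := by
      by_contra hc
      have h1 : (1 : R) ∈ Submodule.restrictScalars K m := by
        have h2 := Submodule.smul_mem (Submodule.restrictScalars K m) c⁻¹ hcm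
        rwa [smul_smul, inv_mul_cancel₀ hc, one_smul] at h2
      exact (IsLocalRing.maximalIdeal.isMaximal R).ne_top ((Ideal.eq_top_iff_one _).mpr h1)
    refine ⟨h, hh, d, ?_, ?_⟩
    · rw [hxeq, hc0, zero_smul, zero_add]
    · rw [hxeq, hc0, zero_smul, zero_add, map_add, map_smul, hy0H h hh, hy0b0,
        smul_eq_mul, mul_one, zero_add]
  -- basic symmetry
  have T13 : ∀ a b c : R, T a b c = T c b a := by
    intro a b c
    rw [hTsymm12 a b c, hTsymm23 b a c, hTsymm12 b c a]
  -- Step 1: T h 1 1 = 0 for h in H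
  have fH : ∀ h ∈ H, T h 1 1 = 0 := by
    intro h hh
    have e := hTinv h hh 1 1 1
    rw [mul_one, hTsymm12 1 h 1, T13 1 1 h] at e
    have e3 : (3 : K) * T h 1 1 = 0 := by linear_combination e
    exact (mul_eq_zero.mp e3).resolve_left (by norm_num)
  -- Claim 1
  have fm : ∀ x ∈ m, T x 1 1 = A * y0 x := by
    intro x hx
    obtain ⟨h, hh, d, hxe, hyd⟩ := decomp x hx
    rw [hyd, hxe]
    have expand : T (h + d • b0) 1 1 = T h 1 1 + d * T b0 1 1 := by
      simp [map_add, map_smul, smul_eq_mul]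
    rw [expand, fH h hh, hA]; ring
  -- basic g identity for second slot in H
  have gH : ∀ h ∈ H, ∀ x : R, (2 : K) * T x h 1 = -T (h * x) 1 1 := by
    intro h hh x
    have e := hTinv h hh x 1 1
    rw [mul_one, hTsymm23 x 1 h] at e
    linear_combination e
  -- vanishing when the product lands in m^4
  have gzero : ∀ h ∈ H, ∀ x : R, h * x ∈ m ^ 4 → T x h 1 = 0 := by
    intro h hh x hx4
    have e := gH h hh x
    rw [fm (h * x) (m4le hx4), hy0m4 _ hx4, mul_zero, neg_zero] at e
    exact (mul_eq_zero.mp e).resolve_left (by norm_num)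
  -- T ap aq h = 0 for h in H
  have Tapaqh : ∀ h ∈ H, T ap aq h = 0 := by
    intro h hh
    have e := hTinv h hh ap aq 1
    rw [mul_one] at e
    have t1 : T (h * ap) aq 1 = 0 := by
      apply gzero aq haqH
      rw [show aq * (h * ap) = b0 * h by rw [hb0eq]; ring]
      exact hmul4 h (hHmm h hh)
    have t2 : T ap (h * aq) 1 = 0 := by
      rw [hTsymm12]
      apply gzero ap hapH
      rw [show ap * (h * aq) = b0 * h by rw [hb0eq]; ring]
      exact hmul4 h (hHmm h hh)
    rw [t1, t2] at e
    linear_combination e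
  have Tapxaq : ∀ x ∈ m, T ap x aq = y0 x * T ap aq b0 := by
    intro x hx
    obtain ⟨h, hh, d, hxe, hyd⟩ := decomp x hx
    rw [hyd, hxe]
    have expand : T ap (h + d • b0) aq = T ap h aq + d * T ap b0 aq := by
      simp [map_add, map_smul, smul_eq_mul]
    rw [expand, hTsymm23 ap h aq, Tapaqh h hh, hTsymm23 ap b0 aq]; ring
  -- G(x) = T x b0 1 in terms of E = T ap aq b0
  have Gform : ∀ x ∈ m, T x b0 1 = -(y0 x * T ap aq b0) := by
    intro x hx
    have e := hTinv aq haqH ap x 1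
    rw [mul_one] at e
    have h1 : T (aq * ap) x 1 = T x b0 1 := by
      rw [show aq * ap = b0 by rw [hb0eq]; ring, hTsymm12]
    have h2 : T ap (aq * x) 1 = 0 := by
      rw [hTsymm12]
      apply gzero ap hapH
      rw [show ap * (aq * x) = b0 * x by rw [hb0eq]; ring]
      exact hmul4 x hx
    rw [h1, h2, Tapxaq x hx] at e
    linear_combination e
  -- E = 0
  have hEzero : T ap aq b0 = 0 := by
    have haqaqm : aq * aq ∈ m := Ideal.mul_mem_right _ _ (hHmm aq haqH)
    have t0 : T (ap * ap) (aq * aq) 1 = 0 := by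
      obtain ⟨h, hh, d, hxe, _⟩ := decomp (aq * aq) haqaqm
      rw [hxe]
      have expand : T (ap * ap) (h + d • b0) 1 = T (ap * ap) h 1 + d * T (ap * ap) b0 1 := by
        simp [map_add, map_smul, smul_eq_mul]
      rw [expand]
      have z1 : T (ap * ap) h 1 = 0 := gzero h hh _ (Ideal.mul_mem_left _ _ hap4)
      have z2 : T (ap * ap) b0 1 = 0 := by
        rw [Gform _ (m4le hap4), hy0m4 _ hap4]; ring
      rw [z1, z2]; ring
    have t1 : T ap ap (aq * aq) = 0 := by
      have e := hTinv ap hapH ap 1 (aq * aq)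
      rw [mul_one] at e
      have h1 : T (ap * ap) 1 (aq * aq) = 0 := by rw [hTsymm23]; exact t0
      have h2 : T ap 1 (ap * (aq * aq)) = 0 := by
        rw [hTsymm23, hTsymm12]
        apply gzero ap hapH
        rw [show ap * (ap * (aq * aq)) = (aq * aq) * (ap * ap) by ring]
        exact Ideal.mul_mem_left _ _ hap4
      rw [h1, h2] at e
      linear_combination e
    have e := hTinv aq haqH ap ap aq
    have hb : aq * ap = b0 := by rw [hb0eq]; ring
    rw [hb, t1, (hTsymm12 b0 ap aq).trans (hTsymm23 ap b0 aq), hTsymm23 ap b0 aq] at e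
    have e2 : (2 : K) * T ap aq b0 = 0 := by linear_combination e
    exact (mul_eq_zero.mp e2).resolve_left (by norm_num)
  have Gzero : ∀ x ∈ m, T x b0 1 = 0 := by
    intro x hx
    rw [Gform x hx, hEzero]; ring
  -- Claim 2
  have gm : ∀ x ∈ m, ∀ x' ∈ m, T x x' 1 = -(1 / 2 : K) * A * y0 (x * x') := by
    intro x hx x' hx'
    obtain ⟨h, hh, d, hxe, _⟩ := decomp x' hx'
    have hy : y0 (x * x') = y0 (h * x) := by
      have hxx : x * x' = h * x + d • (b0 * x) := by
        rw [hxe, mul_add, mul_smul_comm, mul_comm x h, mul_comm x b0]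
      rw [hxx, map_add, map_smul, hy4 x hx, smul_eq_mul, mul_zero, add_zero]
    have expand : T x x' 1 = T x h 1 + d * T x b0 1 := by
      rw [hxe]; simp [map_add, map_smul, smul_eq_mul]
    have e := gH h hh x
    rw [fm (h * x) (Ideal.mul_mem_right x _ (hHmm h hh))] at e
    rw [expand, Gzero x hx, hy, mul_zero, add_zero,
      show -(1 / 2 : K) * A * y0 (h * x) = -(A * y0 (h * x)) / 2 by ring,
      eq_div_iff (by norm_num : (2 : K) ≠ 0)]
    linear_combination e
  -- third slot in H
  have TH : ∀ h ∈ H, ∀ x ∈ m, ∀ x' ∈ m, T x x' h = A * y0 (x * x' * h) := by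
    intro h hh x hx x' hx'
    have e := hTinv h hh x x' 1
    rw [mul_one] at e
    have hhx : h * x ∈ m := Ideal.mul_mem_right x _ (hHmm h hh)
    have hhx' : h * x' ∈ m := Ideal.mul_mem_right x' _ (hHmm h hh)
    rw [gm (h * x) hhx x' hx', gm x hx (h * x') hhx',
      show (h * x) * x' = x * x' * h by ring, show x * (h * x') = x * x' * h by ring] at e
    have hhalf : (1 / 2 : K) + (1 / 2 : K) = 1 := by norm_num
    linear_combination e + A * y0 (x * x' * h) * hhalf
  -- third slot b0
  have Tb0 : ∀ x ∈ m, ∀ x' ∈ m, T x x' b0 = 0 := by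
    intro x hx x' hx'
    have e := hTinv aq haqH x x' ap
    have h1 : T (aq * x) x' ap = 0 := by
      rw [TH ap hapH (aq * x) (Ideal.mul_mem_right x _ (hHmm aq haqH)) x' hx',
        show aq * x * x' * ap = b0 * (x * x') by rw [hb0eq]; ring,
        hy4 _ (Ideal.mul_mem_right x' _ hx), mul_zero]
    have h2 : T x (aq * x') ap = 0 := by
      rw [TH ap hapH x hx (aq * x') (Ideal.mul_mem_right x' _ (hHmm aq haqH)),
        show x * (aq * x') * ap = b0 * (x * x') by rw [hb0eq]; ring,
        hy4 _ (Ideal.mul_mem_right x' _ hx), mul_zero]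
    have hb : aq * ap = b0 := by rw [hb0eq]; ring
    rw [h1, h2, hb] at e
    linear_combination e
  -- Claim 3
  have Tm3 : ∀ x ∈ m, ∀ x' ∈ m, ∀ x'' ∈ m, T x x' x'' = A * y0 (x * x' * x'') := by
    intro x hx x' hx' x'' hx''
    obtain ⟨h, hh, d, hxe, _⟩ := decomp x'' hx''
    have hy : y0 (x * x' * x'') = y0 (x * x' * h) := by
      have hxx : x * x' * x'' = x * x' * h + d • (b0 * (x * x')) := by
        rw [hxe, mul_add, mul_smul_comm, mul_comm (x * x') b0]
      rw [hxx, map_add, map_smul, hy4 _ (Ideal.mul_mem_right x' _ hx), smul_eq_mul,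
        mul_zero, add_zero]
    have expand : T x x' x'' = T x x' h + d * T x x' b0 := by
      rw [hxe]; simp [map_add, map_smul, smul_eq_mul]
    rw [expand, Tb0 x hx x' hx', TH h hh x hx x' hx', hy]; ring
  exact ⟨fm, gm, Tm3⟩
end

section
/- Assume the standing algebra setup. Then K2 ⊆ K3; that is, if a ∈ H satisfies y0(a·b) = 0 for all b ∈ H, then y0(a·b·c) = 0 for all b, c ∈ H. -/
/-- In the standing algebra setup, the kernel `K₂` of the bilinear
form `Q̃₂(a,b) = -(1/2)·y0(ab)` on `H` is contained in the kernel `K₃` of the trilinear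
form `Q̃₃(a,b,c) = y0(abc)`: if `a ∈ H` satisfies `y0(a·b) = 0` for all `b ∈ H`, then
`y0(a·b·c) = 0` for all `b, c ∈ H`. -/
theorem stmt4 (K : Type) [Field K] [CharZero K]
    (R : Type) [CommRing R] [Algebra K R] [IsLocalRing R] [Module.Finite K R]
    (H : Submodule K R)
    (hHm : H ≤ Submodule.restrictScalars K (IsLocalRing.maximalIdeal R))
    (b0 : R) (hb0 : b0 ∈ IsLocalRing.maximalIdeal R ^ 3)
    (hspan : Submodule.span K {(1 : R)} ⊔ H ⊔ Submodule.span K {b0} = ⊤)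
    (hindep : ∀ (c d : K) (h : R), h ∈ H → c • (1 : R) + h + d • b0 = 0 →
      c = 0 ∧ h = 0 ∧ d = 0)
    (y0 : R →ₗ[K] K) (hy0b0 : y0 b0 = 1) (hy0one : y0 1 = 0) (hy0H : ∀ h ∈ H, y0 h = 0)
    (hy0m4 : ∀ x ∈ IsLocalRing.maximalIdeal R ^ 4, y0 x = 0)
    (a : R) (ha : a ∈ H) (haK2 : ∀ b ∈ H, y0 (a * b) = 0) :
    ∀ b ∈ H, ∀ c ∈ H, y0 (a * b * c) = 0 := by
  intro b hb c hc
  have hx : b * c ∈ Submodule.span K {(1 : R)} ⊔ H ⊔ Submodule.span K {b0} := by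
    rw [hspan]; trivial
  rcases Submodule.mem_sup.mp hx with ⟨u, hu, v, hv, huv⟩
  rcases Submodule.mem_sup.mp hu with ⟨p, hp, h, hh, hph⟩
  rcases Submodule.mem_span_singleton.mp hp with ⟨cp, rfl⟩
  rcases Submodule.mem_span_singleton.mp hv with ⟨d, rfl⟩
  have hab0 : y0 (a * b0) = 0 := by
    apply hy0m4
    have ham : a ∈ IsLocalRing.maximalIdeal R := hHm ha
    have hmul : a * b0 ∈ IsLocalRing.maximalIdeal R * IsLocalRing.maximalIdeal R ^ 3 :=
      Ideal.mul_mem_mul ham hb0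
    have : IsLocalRing.maximalIdeal R * IsLocalRing.maximalIdeal R ^ 3
        = IsLocalRing.maximalIdeal R ^ 4 := (pow_succ' _ 3).symm
    rwa [this] at hmul
  have key : a * b * c = cp • a + a * h + d • (a * b0) := by
    have : a * b * c = a * (cp • (1 : R) + h + d • b0) := by
      rw [← hph] at huv
      rw [mul_assoc, ← huv]
    rw [this]
    simp only [mul_add, mul_smul_comm, mul_one]
  rw [key]
  simp [haK2 h hh, hy0H a ha, hab0]
end

section
/- Assume the standing algebra setup. If a ∈ H satisfies Q̃2(a, b) = 0 for all b ∈ K3, then a ∈ K3. In other words, the Q̃2-orthogonal complement of K3 inside H is contained in K3. -/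
/-- In the standing algebra setup, the `Q̃₂`-orthogonal complement of
`K₃` inside `H` is contained in `K₃`: if `a ∈ H` satisfies `Q̃₂(a,b) = 0` for all
`b ∈ K₃` (where `Q̃₂(a,b) = -(1/2)·y0(ab)` and
`K₃ = {b ∈ H : y0(b·u·v) = 0 for all u, v ∈ H}`), then `a ∈ K₃`. -/
theorem stmt5 (K : Type) [Field K] [CharZero K]
    (R : Type) [CommRing R] [Algebra K R] [IsLocalRing R] [Module.Finite K R]
    (H : Submodule K R)
    (hHm : H ≤ Submodule.restrictScalars K (IsLocalRing.maximalIdeal R))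
    (b0 : R) (hb0 : b0 ∈ IsLocalRing.maximalIdeal R ^ 3)
    (hspan : Submodule.span K {(1 : R)} ⊔ H ⊔ Submodule.span K {b0} = ⊤)
    (hindep : ∀ (c d : K) (h : R), h ∈ H → c • (1 : R) + h + d • b0 = 0 →
      c = 0 ∧ h = 0 ∧ d = 0)
    (y0 : R →ₗ[K] K) (hy0b0 : y0 b0 = 1) (hy0one : y0 1 = 0) (hy0H : ∀ h ∈ H, y0 h = 0)
    (hy0m4 : ∀ x ∈ IsLocalRing.maximalIdeal R ^ 4, y0 x = 0)
    (a : R) (ha : a ∈ H)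
    (haperp : ∀ b ∈ H, (∀ u ∈ H, ∀ v ∈ H, y0 (b * u * v) = 0) →
      -(1 / 2 : K) * y0 (a * b) = 0) :
    ∀ u ∈ H, ∀ v ∈ H, y0 (a * u * v) = 0 := by
  intro u hu v hv
  set I := IsLocalRing.maximalIdeal R with hI
  have hmul4 : ∀ x y z w : R, x ∈ I → y ∈ I → z ∈ I → w ∈ I → x*y*z*w ∈ I^4 := by
    intro x y z w hx hy hz hw
    have h4 : I^4 = I*I*I*I := by ring
    rw [h4]
    exact Ideal.mul_mem_mul (Ideal.mul_mem_mul (Ideal.mul_mem_mul hx hy) hz) hw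
  have h43 : I^4 = I^3 * I := by ring
  have hb0I : b0 ∈ I := Ideal.pow_le_self (by norm_num) hb0
  have huI : u ∈ I := hHm hu
  have hvI : v ∈ I := hHm hv
  have haI : a ∈ I := hHm ha
  -- decompose u * v
  have huv : u * v ∈ Submodule.span K {(1 : R)} ⊔ H ⊔ Submodule.span K {b0} := by
    rw [hspan]; trivial
  obtain ⟨x, hx, z, hz, hxz⟩ := Submodule.mem_sup.mp huv
  obtain ⟨x1, hx1, h, hh, hx1h⟩ := Submodule.mem_sup.mp hx
  obtain ⟨c, hc⟩ := Submodule.mem_span_singleton.mp hx1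
  obtain ⟨d, hd⟩ := Submodule.mem_span_singleton.mp hz
  subst hc hd
  have heq : u * v = c • (1:R) + h + d • b0 := by rw [← hxz, ← hx1h]
  -- c = 0 since u*v ∈ m
  have hc0 : c = 0 := by
    by_contra hcne
    have huvI : u * v ∈ I := Ideal.mul_mem_right _ _ huI
    have hcm : c • (1:R) ∈ Submodule.restrictScalars K I := by
      have : c • (1:R) = u * v - h - d • b0 := by rw [heq]; ring
      rw [this]
      exact Submodule.sub_mem _ (Submodule.sub_mem _ huvI (hHm hh))
        (Submodule.smul_mem _ _ hb0I)
    have h1 : (1:R) ∈ Submodule.restrictScalars K I := by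
      have := Submodule.smul_mem _ c⁻¹ hcm
      rwa [smul_smul, inv_mul_cancel₀ hcne, one_smul] at this
    exact (Ideal.ne_top_iff_one I).mp (Ideal.IsMaximal.ne_top inferInstance) h1
  subst hc0
  rw [zero_smul, zero_add] at heq
  -- h ∈ K₃
  have hK3 : ∀ u' ∈ H, ∀ v' ∈ H, y0 (h * u' * v') = 0 := by
    intro u' hu' v' hv'
    have hh' : h = u * v - d • b0 := by rw [heq]; ring
    have : h * u' * v' = u * v * u' * v' - d • (b0 * u' * v') := by
      rw [hh', sub_mul, sub_mul, smul_mul_assoc, smul_mul_assoc]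
    rw [this, map_sub, map_smul]
    have h1 : y0 (u * v * u' * v') = 0 :=
      hy0m4 _ (hmul4 _ _ _ _ huI hvI (hHm hu') (hHm hv'))
    have h2 : y0 (b0 * u' * v') = 0 := by
      apply hy0m4
      exact Ideal.mul_mem_right _ _ (h43 ▸ Ideal.mul_mem_mul hb0 (hHm hu'))
    rw [h1, h2, smul_zero, sub_zero]
  -- conclude
  have hah : y0 (a * h) = 0 := by
    have := haperp h hh hK3
    have hne : -(1/2 : K) ≠ 0 := by norm_num
    exact (mul_eq_zero.mp this).resolve_left hne
  have hab0 : y0 (a * b0) = 0 := by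
    apply hy0m4
    have hmem : b0 * a ∈ I ^ 4 := h43 ▸ Ideal.mul_mem_mul hb0 haI
    rwa [mul_comm]
  have : a * u * v = a * h + d • (a * b0) := by
    rw [mul_assoc, heq, mul_add, mul_smul_comm]
  rw [this, map_add, map_smul, hah, hab0, smul_zero, add_zero]
end

section
/- Let k be a field of characteristic 0 and let H be a finite-dimensional k-vector space with basis a_1, …, a_s, b_1, …, b_r, and fix an integer 0 ≤ k ≤ s. Let Q̃2 be the symmetric bilinear form on H with Q̃2(a_i, b_i) = 1/2 for 1 ≤ i ≤ k, Q̃2(a_j, a_j) = 1 for k < j ≤ s, and all other values on pairs of basis vectors equal to 0, and let Q̃3 be a symmetric trilinear form on H that vanishes whenever one of its arguments lies in span(a_{k+1}, …, a_s, b_1, …, b_r). On the k-vector space R := k·1 ⊕ H ⊕ k·b0 define the unique commutative k-bilinear multiplication with unit 1 such that a·a′ = Q̃2(a, a′)·b0 + Σ_{q=1}^{k} Q̃3(a, a′, a_q)·b_q for all a, a′ ∈ H, and b0·b0 = 0 and b0·h = 0 for all h ∈ H. Then this multiplication is associative, and R is a finite-dimensional commutative associative unital local k-algebra whose maximal ideal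 is m = H ⊕ k·b0, with m⁴ = 0. -/
/-- The algebra `R = K·1 ⊕ H ⊕ K·b0` of Statement 8: a commutative associative unital
`K`-algebra structure on `K·1 ⊕ H ⊕ K·b0` whose multiplication restricted to `H` is
`a·a' = Q̃₂(a,a')·b0 + Σ_{q=1}^{k} Q̃₃(a,a',a_q)·b_q`, with `b0·b0 = 0` and `b0·H = 0`,
which is local with maximal ideal `m = H ⊕ K·b0` and `m⁴ = 0`. -/
structure Stmt8Alg (K : Type) [Field K] {s r : ℕ} (H : Type) [AddCommGroup H] [Module K H]
    (e : Module.Basis (Fin s ⊕ Fin r) K H) (kk : ℕ) (hks : kk ≤ s) (hkr : kk ≤ r)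
    (B : H →ₗ[K] H →ₗ[K] K) (T : H →ₗ[K] H →ₗ[K] H →ₗ[K] K) where
  A : Type
  [commRing : CommRing A]
  [algebra : Algebra K A]
  ι : H →ₗ[K] A
  β0 : A
  /-- `A = K·1 ⊕ H ⊕ K·b0` as a `K`-vector space. -/
  equiv : Function.Bijective (fun p : K × H × K =>
    algebraMap K A p.1 + ι p.2.1 + p.2.2 • β0)
  /-- the prescribed multiplication on `H`:
  `a·a' = Q̃₂(a,a')·b0 + Σ_{q=1}^{k} Q̃₃(a,a',a_q)·b_q`. -/
  mul_ii : ∀ h h' : H, ι h * ι h' = (B h h') • β0 +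
    ι (∑ q : Fin kk,
        T h h' (e (Sum.inl (Fin.castLE hks q))) • e (Sum.inr (Fin.castLE hkr q)))
  mul_b0b0 : β0 * β0 = 0
  mul_b0i : ∀ h : H, β0 * ι h = 0
  [isLocal : IsLocalRing A]
  findim : FiniteDimensional K A
  /-- the maximal ideal is `m = H ⊕ K·b0` -/
  max_eq : Submodule.restrictScalars K (IsLocalRing.maximalIdeal A) =
    LinearMap.range ι ⊔ Submodule.span K {β0}
  m4 : IsLocalRing.maximalIdeal A ^ 4 = 0


section Stmt8Aux

variable {K : Type} [Field K] {s r kk : ℕ} {H : Type} [AddCommGroup H] [Module K H]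

variable (e : Module.Basis (Fin s ⊕ Fin r) K H) (hks : kk ≤ s) (hkr : kk ≤ r)
  (B : H →ₗ[K] H →ₗ[K] K) (T : H →ₗ[K] H →ₗ[K] H →ₗ[K] K)

/-- the vanishing subspace `span(a_{k+1},…,a_s,b_1,…,b_r)` -/
noncomputable def s8V : Submodule K H := Submodule.span K
    ((Set.range fun j : Fin (s - kk) =>
        e (Sum.inl ⟨kk + (j : ℕ), lt_tsub_iff_left.mp j.isLt⟩)) ∪
      Set.range fun j : Fin r => e (Sum.inr j))

lemma s8_inr_mem_V (j : Fin r) : e (Sum.inr j) ∈ s8V (kk := kk) e :=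
  Submodule.subset_span (Or.inr ⟨j, rfl⟩)

lemma s8_inl_mem_V (i : Fin s) (hi : kk ≤ (i : ℕ)) : e (Sum.inl i) ∈ s8V (kk := kk) e := by
  apply Submodule.subset_span
  left
  refine ⟨⟨(i : ℕ) - kk, by have := i.isLt; omega⟩, ?_⟩
  exact congrArg (fun n : Fin s => e (Sum.inl n))
    (Fin.ext (by show kk + ((i : ℕ) - kk) = (i : ℕ); omega))

/-- the `H`-component of the product of two elements of `H` -/
noncomputable def s8sig (h h' : H) : H :=
  ∑ q : Fin kk, T h h' (e (Sum.inl (Fin.castLE hks q))) • e (Sum.inr (Fin.castLE hkr q))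

lemma s8sig_mem_V (h h' : H) : s8sig e hks hkr T h h' ∈ s8V (kk := kk) e :=
  Submodule.sum_mem _ fun q _ => Submodule.smul_mem _ _ (s8_inr_mem_V e _)

lemma s8sig_comm (hTs12 : ∀ x y z : H, T x y z = T y x z) (a b : H) :
    s8sig e hks hkr T a b = s8sig e hks hkr T b a := by
  unfold s8sig
  exact Finset.sum_congr rfl fun q _ => by rw [hTs12]

lemma s8sig_add_left (a b c : H) : s8sig e hks hkr T (a + b) c
    = s8sig e hks hkr T a c + s8sig e hks hkr T b c := by
  simp [s8sig, map_add, LinearMap.add_apply, add_smul, Finset.sum_add_distrib]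

lemma s8sig_add_right (a b c : H) : s8sig e hks hkr T a (b + c)
    = s8sig e hks hkr T a b + s8sig e hks hkr T a c := by
  simp [s8sig, map_add, LinearMap.add_apply, add_smul, Finset.sum_add_distrib]

lemma s8sig_smul_left (t : K) (a c : H) : s8sig e hks hkr T (t • a) c
    = t • s8sig e hks hkr T a c := by
  simp [s8sig, map_smul, LinearMap.smul_apply, smul_smul, Finset.smul_sum]

lemma s8sig_smul_right (t : K) (a c : H) : s8sig e hks hkr T a (t • c)
    = t • s8sig e hks hkr T a c := by
  simp [s8sig, map_smul, LinearMap.smul_apply, smul_smul, Finset.smul_sum]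

lemma s8sig_zero_left (c : H) : s8sig e hks hkr T 0 c = 0 := by
  simp [s8sig]

lemma s8sig_zero_right (c : H) : s8sig e hks hkr T c 0 = 0 := by
  simp [s8sig]

lemma s8sig_left_vanish
    (hTv : ∀ x ∈ s8V (kk := kk) e, ∀ u v : H, T x u v = 0 ∧ T u x v = 0 ∧ T u v x = 0)
    {a : H} (ha : a ∈ s8V (kk := kk) e) (b : H) :
    s8sig e hks hkr T a b = 0 := by
  unfold s8sig
  apply Finset.sum_eq_zero
  intro q _
  rw [(hTv a ha b (e (Sum.inl (Fin.castLE hks q)))).1, zero_smul]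

lemma s8sig_right_vanish
    (hTv : ∀ x ∈ s8V (kk := kk) e, ∀ u v : H, T x u v = 0 ∧ T u x v = 0 ∧ T u v x = 0)
    {a : H} (ha : a ∈ s8V (kk := kk) e) (b : H) :
    s8sig e hks hkr T b a = 0 := by
  unfold s8sig
  apply Finset.sum_eq_zero
  intro q _
  rw [(hTv a ha b (e (Sum.inl (Fin.castLE hks q)))).2.1, zero_smul]

lemma s8sum (f : Fin s → K) (hf : ∀ i : Fin s, kk ≤ (i : ℕ) → f i = 0) :
    ∑ i, f i = ∑ q : Fin kk, f (Fin.castLE hks q) := by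
  classical
  rw [show (∑ q : Fin kk, f (Fin.castLE hks q))
      = ∑ i ∈ Finset.univ.map ⟨Fin.castLE hks, Fin.castLE_injective hks⟩, f i by
    rw [Finset.sum_map]; rfl]
  refine (Finset.sum_subset (Finset.subset_univ _) ?_).symm
  intro i _ hi
  apply hf
  by_contra h
  push_neg at h
  exact hi (Finset.mem_map.2 ⟨⟨(i : ℕ), h⟩, Finset.mem_univ _, rfl⟩)

lemma s8B_b (hBsymm : ∀ x y : H, B x y = B y x)
    (hBab : ∀ i : Fin s, ∀ j : Fin r, B (e (Sum.inl i)) (e (Sum.inr j)) =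
      if (i : ℕ) = (j : ℕ) ∧ (i : ℕ) < kk then 1 / 2 else 0)
    (hBbb : ∀ i j : Fin r, B (e (Sum.inr i)) (e (Sum.inr j)) = 0)
    (j : Fin r) (hj : (j : ℕ) < kk) (c : H) :
    B (e (Sum.inr j)) c = 1 / 2 * e.repr c (Sum.inl ⟨(j : ℕ), hj.trans_le hks⟩) := by
  have hcond : ∀ i : Fin s, (((i : ℕ) = (j : ℕ)) ∧ (i : ℕ) < kk) ↔
      i = ⟨(j : ℕ), hj.trans_le hks⟩ := by
    intro i
    constructor
    · rintro ⟨h1, _⟩; exact Fin.ext h1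
    · rintro rfl; exact ⟨rfl, hj⟩
  conv_lhs => rw [← e.sum_repr c]
  rw [map_sum, Fintype.sum_sum_type]
  simp only [map_smul, smul_eq_mul]
  have h1 : ∀ i : Fin s, B (e (Sum.inr j)) (e (Sum.inl i))
      = if i = ⟨(j : ℕ), hj.trans_le hks⟩ then 1 / 2 else 0 := by
    intro i; rw [← hBsymm, hBab, if_congr (hcond i) rfl rfl]
  have h2 : ∀ i : Fin r, B (e (Sum.inr j)) (e (Sum.inr i)) = 0 := fun i => hBbb j i
  simp only [h1, h2, mul_zero, Finset.sum_const_zero, add_zero, mul_ite, mul_one]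
  rw [Finset.sum_ite_eq' Finset.univ]
  simp [mul_comm]

lemma s8B_sig (hBsymm : ∀ x y : H, B x y = B y x)
    (hBab : ∀ i : Fin s, ∀ j : Fin r, B (e (Sum.inl i)) (e (Sum.inr j)) =
      if (i : ℕ) = (j : ℕ) ∧ (i : ℕ) < kk then 1 / 2 else 0)
    (hBbb : ∀ i j : Fin r, B (e (Sum.inr i)) (e (Sum.inr j)) = 0)
    (hTv : ∀ x ∈ s8V (kk := kk) e, ∀ u v : H, T x u v = 0 ∧ T u x v = 0 ∧ T u v x = 0)
    (a b c : H) :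
    B (s8sig e hks hkr T a b) c = 1 / 2 * T a b c := by
  unfold s8sig
  rw [map_sum, LinearMap.sum_apply]
  simp only [map_smul, LinearMap.smul_apply, smul_eq_mul]
  have key : ∀ q : Fin kk, B (e (Sum.inr (Fin.castLE hkr q))) c
      = 1 / 2 * e.repr c (Sum.inl (Fin.castLE hks q)) := fun q =>
    s8B_b e hks B hBsymm hBab hBbb (Fin.castLE hkr q) q.isLt c
  have hr : T a b c = ∑ q : Fin kk,
      e.repr c (Sum.inl (Fin.castLE hks q)) * T a b (e (Sum.inl (Fin.castLE hks q))) := by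
    conv_lhs => rw [← e.sum_repr c]
    rw [map_sum, Fintype.sum_sum_type]
    simp only [map_smul, smul_eq_mul]
    have h2 : ∀ i : Fin r, T a b (e (Sum.inr i)) = 0 := fun i =>
      (hTv _ (s8_inr_mem_V e i) a b).2.2
    simp only [h2, mul_zero, Finset.sum_const_zero, add_zero]
    exact s8sum hks _ fun i hi => by
      rw [(hTv _ (s8_inl_mem_V e i hi) a b).2.2, mul_zero]
  rw [hr, Finset.mul_sum]
  apply Finset.sum_congr rfl
  intro q _
  rw [key q]
  ring

end Stmt8Aux

section Stmt8Ring

variable {K : Type} [Field K] {s r kk : ℕ} {H : Type} [AddCommGroup H] [Module K H]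

variable (e : Module.Basis (Fin s ⊕ Fin r) K H) (hks : kk ≤ s) (hkr : kk ≤ r)
  (B : H →ₗ[K] H →ₗ[K] K) (T : H →ₗ[K] H →ₗ[K] H →ₗ[K] K)

/-- the multiplication on `R = K·1 ⊕ H ⊕ K·b0` -/
noncomputable def s8mul (x y : K × H × K) : K × H × K :=
  (x.1 * y.1,
   x.1 • y.2.1 + y.1 • x.2.1 + s8sig e hks hkr T x.2.1 y.2.1,
   x.1 * y.2.2 + y.1 * x.2.2 + B x.2.1 y.2.1)

lemma s8tri_ext {x y : K × H × K} (h1 : x.1 = y.1) (h2 : x.2.1 = y.2.1)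
    (h3 : x.2.2 = y.2.2) : x = y := by
  obtain ⟨a, b, c⟩ := x
  obtain ⟨d, f, g⟩ := y
  simp_all

/-- the commutative ring structure on `R = K·1 ⊕ H ⊕ K·b0` -/
@[reducible]
noncomputable def s8Ring
    (hBsymm : ∀ x y : H, B x y = B y x)
    (hBab : ∀ i : Fin s, ∀ j : Fin r, B (e (Sum.inl i)) (e (Sum.inr j)) =
      if (i : ℕ) = (j : ℕ) ∧ (i : ℕ) < kk then 1 / 2 else 0)
    (hBbb : ∀ i j : Fin r, B (e (Sum.inr i)) (e (Sum.inr j)) = 0)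
    (hTs12 : ∀ x y z : H, T x y z = T y x z)
    (hTs23 : ∀ x y z : H, T x y z = T x z y)
    (hTv : ∀ x ∈ s8V (kk := kk) e, ∀ u v : H, T x u v = 0 ∧ T u x v = 0 ∧ T u v x = 0) :
    CommRing (K × H × K) :=
  have hσσl : ∀ a b c : H, s8sig e hks hkr T (s8sig e hks hkr T a b) c = 0 := fun a b c =>
    s8sig_left_vanish e hks hkr T hTv (s8sig_mem_V e hks hkr T a b) c
  have hσσr : ∀ a b c : H, s8sig e hks hkr T c (s8sig e hks hkr T a b) = 0 := fun a b c =>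
    s8sig_right_vanish e hks hkr T hTv (s8sig_mem_V e hks hkr T a b) c
  have hBσ : ∀ a b c : H, B (s8sig e hks hkr T a b) c = 1 / 2 * T a b c := fun a b c =>
    s8B_sig e hks hkr B T hBsymm hBab hBbb hTv a b c
  have hσB : ∀ a b c : H, B c (s8sig e hks hkr T a b) = 1 / 2 * T a b c := fun a b c => by
    rw [hBsymm]; exact hBσ a b c
  { (inferInstance : AddCommGroup (K × H × K)) with
    mul := s8mul e hks hkr B T
    one := (1, 0, 0)
    left_distrib := by
      intro x y z
      show s8mul e hks hkr B T x (y + z)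
        = s8mul e hks hkr B T x y + s8mul e hks hkr B T x z
      refine s8tri_ext ?_ ?_ ?_ <;>
        simp only [s8mul, Prod.fst_add, Prod.snd_add, s8sig_add_right, map_add,
          LinearMap.add_apply, smul_add, add_smul]
      · ring
      · module
      · ring
    right_distrib := by
      intro x y z
      show s8mul e hks hkr B T (x + y) z
        = s8mul e hks hkr B T x z + s8mul e hks hkr B T y z
      refine s8tri_ext ?_ ?_ ?_ <;>
        simp only [s8mul, Prod.fst_add, Prod.snd_add, s8sig_add_left, map_add,
          LinearMap.add_apply, smul_add, add_smul]
      · ring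
      · module
      · ring
    zero_mul := by
      intro x
      show s8mul e hks hkr B T 0 x = 0
      refine s8tri_ext ?_ ?_ ?_ <;>
        simp [s8mul, s8sig_zero_left]
    mul_zero := by
      intro x
      show s8mul e hks hkr B T x 0 = 0
      refine s8tri_ext ?_ ?_ ?_ <;>
        simp [s8mul, s8sig_zero_right]
    mul_assoc := by
      intro x y z
      show s8mul e hks hkr B T (s8mul e hks hkr B T x y) z
        = s8mul e hks hkr B T x (s8mul e hks hkr B T y z)
      have hTr : T y.2.1 z.2.1 x.2.1 = T x.2.1 y.2.1 z.2.1 :=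
        (hTs23 y.2.1 z.2.1 x.2.1).trans (hTs12 y.2.1 x.2.1 z.2.1)
      refine s8tri_ext ?_ ?_ ?_ <;>
        simp only [s8mul, s8sig_add_left, s8sig_add_right, s8sig_smul_left, s8sig_smul_right,
          hσσl, hσσr, hBσ, hσB, map_add, map_smul, LinearMap.add_apply, LinearMap.smul_apply,
          smul_eq_mul, smul_add, add_smul, add_zero, zero_add, smul_zero, map_zero,
          LinearMap.zero_apply, mul_zero]
      · ring
      · module
      · rw [hTr]; ring
    one_mul := by
      intro x
      show s8mul e hks hkr B T (1, 0, 0) x = x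
      refine s8tri_ext ?_ ?_ ?_ <;>
        simp [s8mul, s8sig_zero_left]
    mul_one := by
      intro x
      show s8mul e hks hkr B T x (1, 0, 0) = x
      refine s8tri_ext ?_ ?_ ?_ <;>
        simp [s8mul, s8sig_zero_right]
    mul_comm := by
      intro x y
      show s8mul e hks hkr B T x y = s8mul e hks hkr B T y x
      refine s8tri_ext ?_ ?_ ?_ <;>
        simp only [s8mul, s8sig_comm e hks hkr T hTs12 x.2.1 y.2.1, hBsymm x.2.1 y.2.1]
      · ring
      · module
      · ring }

end Stmt8Ring

/-- construction of the algebra, cf. the Second Step. Given a basis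
`a₁,…,a_s, b₁,…,b_r` of `H`, `0 ≤ k ≤ s` (and `k ≤ r`), the hyperbolic/diagonal
symmetric bilinear form `Q̃₂` and a symmetric trilinear form `Q̃₃` vanishing whenever an
argument lies in `span(a_{k+1},…,a_s,b₁,…,b_r)`, the multiplication
`a·a' = Q̃₂(a,a')·b0 + Σ_q Q̃₃(a,a',a_q)·b_q`, `b0·b0 = 0`, `b0·H = 0` on
`R = K·1 ⊕ H ⊕ K·b0` is associative and makes `R` a finite-dimensional commutative
associative unital local `K`-algebra with maximal ideal `m = H ⊕ K·b0` and `m⁴ = 0`. -/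
theorem stmt8 (K : Type) [Field K] [CharZero K] (s r kk : ℕ) (hks : kk ≤ s) (hkr : kk ≤ r)
    (H : Type) [AddCommGroup H] [Module K H] (e : Module.Basis (Fin s ⊕ Fin r) K H)
    (B : H →ₗ[K] H →ₗ[K] K)
    (hBsymm : ∀ x y : H, B x y = B y x)
    (hBaa : ∀ i j : Fin s, B (e (Sum.inl i)) (e (Sum.inl j)) =
      if i = j ∧ kk ≤ (i : ℕ) then 1 else 0)
    (hBab : ∀ i : Fin s, ∀ j : Fin r, B (e (Sum.inl i)) (e (Sum.inr j)) =
      if (i : ℕ) = (j : ℕ) ∧ (i : ℕ) < kk then 1 / 2 else 0)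
    (hBbb : ∀ i j : Fin r, B (e (Sum.inr i)) (e (Sum.inr j)) = 0)
    (T : H →ₗ[K] H →ₗ[K] H →ₗ[K] K)
    (hTsymm12 : ∀ x y z : H, T x y z = T y x z)
    (hTsymm23 : ∀ x y z : H, T x y z = T x z y)
    (hTvanish : ∀ x ∈ Submodule.span K
        ((Set.range fun j : Fin (s - kk) =>
            e (Sum.inl ⟨kk + (j : ℕ), by have := j.isLt; omega⟩)) ∪
          Set.range fun j : Fin r => e (Sum.inr j)),
      ∀ u v : H, T x u v = 0 ∧ T u x v = 0 ∧ T u v x = 0) :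
    Nonempty (Stmt8Alg K H e kk hks hkr B T) := by
  classical
  have hTv : ∀ x ∈ s8V (kk := kk) e, ∀ u v : H, T x u v = 0 ∧ T u x v = 0 ∧ T u v x = 0 :=
    hTvanish
  letI instR : CommRing (K × H × K) := s8Ring e hks hkr B T hBsymm hBab hBbb hTsymm12 hTsymm23 hTv
  letI instA : Algebra K (K × H × K) :=
  { toSMul := (inferInstance : SMul K (K × H × K))
    algebraMap :=
    { toFun := fun c => (c, (0 : H), (0 : K))
      map_one' := rfl
      map_mul' := by
        intro c d
        show ((c * d, (0 : H), (0 : K)) : K × H × K)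
          = s8mul e hks hkr B T (c, (0 : H), (0 : K)) (d, (0 : H), (0 : K))
        refine (s8tri_ext ?_ ?_ ?_).symm <;> simp [s8mul, s8sig_zero_left]
      map_zero' := rfl
      map_add' := by
        intro c d
        refine (s8tri_ext ?_ ?_ ?_).symm <;> simp }
    commutes' := fun c x => mul_comm _ _
    smul_def' := by
      intro c x
      show c • x = s8mul e hks hkr B T (c, (0 : H), (0 : K)) x
      refine s8tri_ext ?_ ?_ ?_ <;>
        simp [s8mul, s8sig_zero_left, Prod.smul_fst, Prod.smul_snd, smul_eq_mul] }
  -- component computation lemmas (all definitional)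
  have hmul : ∀ x y : K × H × K, x * y = s8mul e hks hkr B T x y := fun _ _ => rfl
  have hA1 : ∀ x y : K × H × K, (x + y).1 = x.1 + y.1 := fun _ _ => rfl
  have hA2 : ∀ x y : K × H × K, (x + y).2.1 = x.2.1 + y.2.1 := fun _ _ => rfl
  have hA3 : ∀ x y : K × H × K, (x + y).2.2 = x.2.2 + y.2.2 := fun _ _ => rfl
  have hS1 : ∀ (c : K) (x : K × H × K), (c • x).1 = c * x.1 := fun _ _ => rfl
  have hS2 : ∀ (c : K) (x : K × H × K), (c • x).2.1 = c • x.2.1 := fun _ _ => rfl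
  have hS3 : ∀ (c : K) (x : K × H × K), (c • x).2.2 = c * x.2.2 := fun _ _ => rfl
  have hsub1 : ∀ x y : K × H × K, (x - y).1 = x.1 - y.1 := fun _ _ => rfl
  have hMap : ∀ c : K, algebraMap K (K × H × K) c = (c, (0 : H), (0 : K)) := fun _ => rfl
  have hzero : (0 : K × H × K) = ((0 : K), (0 : H), (0 : K)) := rfl
  have hone : (1 : K × H × K) = ((1 : K), (0 : H), (0 : K)) := rfl
  -- the embedding of H
  let ιm : H →ₗ[K] K × H × K :=
  { toFun := fun h => ((0 : K), h, (0 : K))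
    map_add' := by intro a b; refine (s8tri_ext ?_ ?_ ?_).symm <;> simp
    map_smul' := by
      intro c a
      refine (s8tri_ext ?_ ?_ ?_).symm <;>
        simp [Prod.smul_fst, Prod.smul_snd, smul_eq_mul] }
  have hι : ∀ h : H, ιm h = ((0 : K), h, (0 : K)) := fun _ => rfl
  -- bijectivity
  have hequiv : Function.Bijective (fun p : K × H × K =>
      algebraMap K (K × H × K) p.1 + ιm p.2.1 + p.2.2 • (((0 : K), (0 : H), (1 : K)) : K × H × K)) := by
    have hid : (fun p : K × H × K =>
        algebraMap K (K × H × K) p.1 + ιm p.2.1 + p.2.2 • (((0 : K), (0 : H), (1 : K)) : K × H × K))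
        = fun p => p := by
      funext p
      refine s8tri_ext ?_ ?_ ?_ <;>
        simp [hA1, hA2, hA3, hS1, hS2, hS3, hι, hMap]
    rw [hid]
    exact Function.bijective_id
  -- multiplication relations
  have hmulii : ∀ h h' : H, ιm h * ιm h'
      = (B h h') • (((0 : K), (0 : H), (1 : K)) : K × H × K) + ιm (s8sig e hks hkr T h h') := by
    intro h h'
    rw [hmul]
    refine s8tri_ext ?_ ?_ ?_ <;>
      simp [s8mul, hA1, hA2, hA3, hS1, hS2, hS3, hι]
  have hb0b0 : (((0 : K), (0 : H), (1 : K)) : K × H × K) * ((0 : K), (0 : H), (1 : K)) = 0 := by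
    rw [hmul, hzero]
    refine s8tri_ext ?_ ?_ ?_ <;> simp [s8mul, s8sig_zero_left]
  have hb0i : ∀ h : H, (((0 : K), (0 : H), (1 : K)) : K × H × K) * ιm h = 0 := by
    intro h
    rw [hmul, hzero]
    refine s8tri_ext ?_ ?_ ?_ <;> simp [s8mul, hι, s8sig_zero_left]
  -- nilpotency of the "augmentation ideal"
  have hσσr : ∀ a b c : H, s8sig e hks hkr T c (s8sig e hks hkr T a b) = 0 := fun a b c =>
    s8sig_right_vanish e hks hkr T hTv (s8sig_mem_V e hks hkr T a b) c
  have hquad : ∀ x y z w : K × H × K, x.1 = 0 → y.1 = 0 → z.1 = 0 → w.1 = 0 →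
      x * (y * (z * w)) = 0 := by
    intro x y z w hx hy hz hw
    rw [hmul, hmul, hmul, hzero]
    refine s8tri_ext ?_ ?_ ?_ <;>
      simp [s8mul, hx, hy, hz, hw, s8sig_zero_left, s8sig_zero_right, hσσr]
  letI : Nontrivial (K × H × K) :=
    ⟨(1, 0, 0), (0, 0, 0), fun h => one_ne_zero (congrArg Prod.fst h)⟩
  have hnil : ∀ x : K × H × K, x.1 = 0 → x ^ 4 = 0 := by
    intro x hx
    have h4 : x ^ 4 = x * (x * (x * x)) := by ring
    rw [h4]
    exact hquad x x x x hx hx hx hx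
  have hunit : ∀ x : K × H × K, x.1 ≠ 0 → IsUnit x := by
    intro x hx
    have hu : IsUnit (algebraMap K (K × H × K) x.1) :=
      (isUnit_iff_ne_zero.mpr hx).map (algebraMap K (K × H × K))
    have hn : IsNilpotent (x - algebraMap K (K × H × K) x.1) :=
      ⟨4, hnil _ (by rw [hsub1, hMap]; simp)⟩
    have h := hn.isUnit_add_right_of_commute hu (Commute.all _ _)
    have heq : x - algebraMap K (K × H × K) x.1 + algebraMap K (K × H × K) x.1 = x := by ring
    rwa [heq] at h
  have hnonunit : ∀ x : K × H × K, x.1 = 0 → ¬ IsUnit x := by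
    intro x hx hu
    have h := hu.pow 4
    rw [hnil x hx] at h
    exact not_isUnit_zero h
  letI instL : IsLocalRing (K × H × K) := IsLocalRing.of_isUnit_or_isUnit_one_sub_self (by
    intro a
    by_cases h : a.1 = 0
    · right
      apply hunit
      rw [hsub1, hone, h]
      simp
    · left
      exact hunit a h)
  have hmem : ∀ x : K × H × K, x ∈ IsLocalRing.maximalIdeal (K × H × K) ↔ x.1 = 0 := by
    intro x
    rw [IsLocalRing.mem_maximalIdeal, mem_nonunits_iff]
    constructor
    · intro h
      by_contra hc
      exact h (hunit x hc)
    · exact hnonunit x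
  -- the maximal ideal description
  have hmax : Submodule.restrictScalars K (IsLocalRing.maximalIdeal (K × H × K)) =
      LinearMap.range ιm ⊔ Submodule.span K {(((0 : K), (0 : H), (1 : K)) : K × H × K)} := by
    ext x
    rw [Submodule.restrictScalars_mem, hmem]
    constructor
    · intro hx
      have hxeq : ιm x.2.1 + x.2.2 • (((0 : K), (0 : H), (1 : K)) : K × H × K) = x := by
        refine s8tri_ext ?_ ?_ ?_ <;>
          simp [hA1, hA2, hA3, hS1, hS2, hS3, hι, hx]
      rw [← hxeq]
      exact Submodule.add_mem _
        (Submodule.mem_sup_left ⟨x.2.1, rfl⟩)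
        (Submodule.mem_sup_right
          (Submodule.smul_mem _ _ (Submodule.mem_span_singleton_self _)))
    · intro hx
      obtain ⟨y, hy, z, hz, rfl⟩ := Submodule.mem_sup.mp hx
      obtain ⟨h, rfl⟩ := hy
      rw [Submodule.mem_span_singleton] at hz
      obtain ⟨c, rfl⟩ := hz
      simp [hA1, hS1, hι]
  -- m^4 = 0
  have hm4 : IsLocalRing.maximalIdeal (K × H × K) ^ 4 = 0 := by
    let J : Ideal (K × H × K) :=
    { carrier := {x : K × H × K | x.1 = 0 ∧ x.2.1 ∈ s8V (kk := kk) e}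
      add_mem' := by
        rintro a b ⟨ha1, ha2⟩ ⟨hb1, hb2⟩
        exact ⟨by rw [hA1, ha1, hb1, add_zero], by
          rw [hA2]; exact Submodule.add_mem _ ha2 hb2⟩
      zero_mem' := ⟨rfl, Submodule.zero_mem _⟩
      smul_mem' := by
        rintro c x ⟨hx1, hx2⟩
        refine ⟨?_, ?_⟩
        · show (c * x).1 = 0
          rw [hmul]
          show c.1 * x.1 = 0
          rw [hx1, mul_zero]
        · show (c * x).2.1 ∈ _
          rw [hmul]
          show c.1 • x.2.1 + x.1 • c.2.1 + s8sig e hks hkr T c.2.1 x.2.1 ∈ _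
          rw [hx1]
          exact Submodule.add_mem _
            (Submodule.add_mem _ (Submodule.smul_mem _ _ hx2)
              (by rw [zero_smul]; exact Submodule.zero_mem _))
            (s8sig_mem_V e hks hkr T _ _) }
    let J2 : Ideal (K × H × K) :=
    { carrier := {x : K × H × K | x.1 = 0 ∧ x.2.1 = 0}
      add_mem' := by
        rintro a b ⟨ha1, ha2⟩ ⟨hb1, hb2⟩
        exact ⟨by rw [hA1, ha1, hb1, add_zero], by rw [hA2, ha2, hb2, add_zero]⟩
      zero_mem' := ⟨rfl, rfl⟩
      smul_mem' := by
        rintro c x ⟨hx1, hx2⟩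
        refine ⟨?_, ?_⟩
        · show (c * x).1 = 0
          rw [hmul]
          show c.1 * x.1 = 0
          rw [hx1, mul_zero]
        · show (c * x).2.1 = 0
          rw [hmul]
          show c.1 • x.2.1 + x.1 • c.2.1 + s8sig e hks hkr T c.2.1 x.2.1 = 0
          rw [hx1, hx2, s8sig_zero_right, smul_zero, add_zero, zero_smul, add_zero] }
    have hJmem : ∀ x : K × H × K, x ∈ J ↔ (x.1 = 0 ∧ x.2.1 ∈ s8V (kk := kk) e) :=
      fun _ => Iff.rfl
    have hJ2mem : ∀ x : K × H × K, x ∈ J2 ↔ (x.1 = 0 ∧ x.2.1 = 0) := fun _ => Iff.rfl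
    have h1 : IsLocalRing.maximalIdeal (K × H × K) * IsLocalRing.maximalIdeal (K × H × K) ≤ J :=
      Ideal.mul_le.2 (by
        intro a ha b hb
        have ha1 := (hmem a).1 ha
        have hb1 := (hmem b).1 hb
        rw [hJmem]
        refine ⟨?_, ?_⟩
        · show (a * b).1 = 0
          rw [hmul]; show a.1 * b.1 = 0; rw [ha1, zero_mul]
        · show (a * b).2.1 ∈ _
          rw [hmul]
          show a.1 • b.2.1 + b.1 • a.2.1 + s8sig e hks hkr T a.2.1 b.2.1 ∈ _
          rw [ha1, hb1, zero_smul, zero_smul, zero_add, zero_add]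
          exact s8sig_mem_V e hks hkr T _ _)
    have h2 : J * IsLocalRing.maximalIdeal (K × H × K) ≤ J2 := Ideal.mul_le.2 (by
      intro a ha b hb
      obtain ⟨ha1, ha2⟩ := (hJmem a).1 ha
      have hb1 := (hmem b).1 hb
      rw [hJ2mem]
      refine ⟨?_, ?_⟩
      · show (a * b).1 = 0
        rw [hmul]; show a.1 * b.1 = 0; rw [ha1, zero_mul]
      · show (a * b).2.1 = 0
        rw [hmul]
        show a.1 • b.2.1 + b.1 • a.2.1 + s8sig e hks hkr T a.2.1 b.2.1 = 0
        rw [ha1, hb1, zero_smul, zero_smul, zero_add, zero_add]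
        exact s8sig_left_vanish e hks hkr T hTv ha2 _)
    have h3 : J2 * IsLocalRing.maximalIdeal (K × H × K) ≤ ⊥ := Ideal.mul_le.2 (by
      intro a ha b hb
      obtain ⟨ha1, ha2⟩ := (hJ2mem a).1 ha
      have hb1 := (hmem b).1 hb
      rw [Ideal.mem_bot, hmul, hzero]
      refine s8tri_ext ?_ ?_ ?_ <;>
        simp [s8mul, ha1, ha2, hb1, s8sig_zero_left])
    have hle : IsLocalRing.maximalIdeal (K × H × K) ^ 4 ≤ ⊥ := by
      have hpow : IsLocalRing.maximalIdeal (K × H × K) ^ 4 =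
          ((IsLocalRing.maximalIdeal (K × H × K) * IsLocalRing.maximalIdeal (K × H × K))
            * IsLocalRing.maximalIdeal (K × H × K)) * IsLocalRing.maximalIdeal (K × H × K) := by
        rw [pow_succ, pow_succ, pow_succ, pow_one]
      rw [hpow]
      calc ((IsLocalRing.maximalIdeal (K × H × K) * IsLocalRing.maximalIdeal (K × H × K))
            * IsLocalRing.maximalIdeal (K × H × K)) * IsLocalRing.maximalIdeal (K × H × K)
          ≤ (J * IsLocalRing.maximalIdeal (K × H × K)) * IsLocalRing.maximalIdeal (K × H × K) :=
            Ideal.mul_mono (Ideal.mul_mono h1 le_rfl) le_rfl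
        _ ≤ J2 * IsLocalRing.maximalIdeal (K × H × K) := Ideal.mul_mono h2 le_rfl
        _ ≤ ⊥ := h3
    exact le_bot_iff.mp hle
  have hfd : FiniteDimensional K (K × H × K) := by
    have : FiniteDimensional K H := Module.Finite.of_basis e
    infer_instance
  exact ⟨{ A := K × H × K
           commRing := instR
           algebra := instA
           ι := ιm
           β0 := ((0 : K), (0 : H), (1 : K))
           equiv := hequiv
           mul_ii := hmulii
           mul_b0b0 := hb0b0
           mul_b0i := hb0i
           isLocal := instL
           findim := hfd
           max_eq := hmax
           m4 := hm4 }⟩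
end

section
/- Let k be an algebraically closed field of characteristic 0 and let Q be a cubic form of form (1) in n+1 variables with k+s+1 = n (so the variables are x0, …, xs, y0, …, yk). Then for a nonzero vector v ∈ k^{n+1}, the directional derivative D_v Q is the square of a linear form if and only if v is a scalar multiple of the coordinate direction of y0; in that case D_v Q is the corresponding scalar multiple of x0². -/
open MvPolynomial

/-- A cubic form `Q` in `k` variables is *non-degenerate* if no nontrivial linear
combination of its partial derivatives vanishes identically. -/
def NondegCubic {K : Type} [Field K] {k : ℕ} (Q : MvPolynomial (Fin k) K) : Prop :=
  ∀ α : Fin k → K, (∑ i, α i • pderiv i Q) = 0 → α = 0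

/-- The cubic form of "form (1)": in the variables
`x₀ = X 0, …, x_s = X s, y₀ = X (s+1), y₁ = X (s+2), …, y_{n-s-1} = X n`,
it is `x₀²y₀ + x₀(x₁y₁ + ⋯ + x_k y_k) + x₀(x_{k+1}² + ⋯ + x_s²) + Q₃(x₁,…,x_k)`. -/
noncomputable def form1Poly (K : Type) [Field K] (n k s : ℕ)
    (hks : k ≤ s) (hsn : k + s + 1 ≤ n) (Q3 : MvPolynomial (Fin k) K) :
    MvPolynomial (Fin (n + 1)) K :=
  X (⟨0, by omega⟩ : Fin (n + 1)) ^ 2 * X ⟨s + 1, by omega⟩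
    + X (⟨0, by omega⟩ : Fin (n + 1)) *
        (∑ i : Fin k, X (⟨(i : ℕ) + 1, by have := i.isLt; omega⟩ : Fin (n + 1)) *
          X (⟨s + 2 + (i : ℕ), by have := i.isLt; omega⟩ : Fin (n + 1)))
    + X (⟨0, by omega⟩ : Fin (n + 1)) *
        (∑ j : Fin (s - k), X (⟨k + 1 + (j : ℕ), by have := j.isLt; omega⟩ : Fin (n + 1)) ^ 2)
    + rename (fun i : Fin k => (⟨(i : ℕ) + 1, by have := i.isLt; omega⟩ : Fin (n + 1))) Q3


theorem sum_smul_pderiv {K : Type} [Field K] {N : ℕ} (v : Fin N → K) (p : MvPolynomial (Fin N) K) :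
    (∑ t, v t • pderiv t p) = mkDerivation K (fun j => (C (v j) : MvPolynomial (Fin N) K)) p := by
  induction p using MvPolynomial.induction_on with
  | C a => simp [pderiv_C, derivation_C]
  | add p q hp hq => simp only [map_add, smul_add, Finset.sum_add_distrib, hp, hq]
  | mul_X p j hp =>
    have h1 : ∀ t : Fin N, v t • (pderiv t p * X j + p * pderiv t (X j))
        = (v t • pderiv t p) * X j + p * (v t • pderiv t (X j)) := by
      intro t; rw [smul_add, smul_mul_assoc, mul_smul_comm]
    simp only [pderiv_mul, h1, Finset.sum_add_distrib, ← Finset.sum_mul, ← Finset.mul_sum]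
    have h2 : (∑ t, v t • pderiv t (X j : MvPolynomial (Fin N) K)) = C (v j) := by
      rw [Finset.sum_eq_single j]
      · simp [smul_eq_C_mul]
      · intro t _ ht; rw [pderiv_X_of_ne (Ne.symm ht), smul_zero]
      · simp
    rw [h2, hp, Derivation.leibniz, mkDerivation_X, smul_eq_mul, smul_eq_mul]
    ring

theorem mkDer_rename {K : Type} [Field K] {k N : ℕ} (f : Fin k → Fin N) (v : Fin N → K)
    (p : MvPolynomial (Fin k) K) :
    mkDerivation K (fun j => (C (v j) : MvPolynomial (Fin N) K)) (rename f p)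
      = rename f (mkDerivation K (fun i => (C (v (f i)) : MvPolynomial (Fin k) K)) p) := by
  induction p using MvPolynomial.induction_on with
  | C a => simp [derivation_C]
  | add p q hp hq => simp only [map_add, hp, hq]
  | mul_X p i hp =>
    simp only [map_mul, rename_X, Derivation.leibniz, mkDerivation_X, smul_eq_mul, map_add,
      map_mul, rename_C, hp]

theorem deg_one_single {σ : Type*} [DecidableEq σ] (d : σ →₀ ℕ) (hd : Finsupp.degree d = 1) :
    ∃ t, d = Finsupp.single t 1 := by
  have hd0 : d ≠ 0 := by
    intro h; rw [h, map_zero] at hd; exact one_ne_zero hd.symm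
  obtain ⟨t, ht⟩ := Finsupp.ne_iff.mp hd0
  simp only [Finsupp.coe_zero, Pi.zero_apply] at ht
  refine ⟨t, ?_⟩
  have h1 : d t ≤ 1 := hd ▸ Finsupp.le_degree t d
  ext a
  rcases eq_or_ne a t with rfl | hat
  · simp only [Finsupp.single_eq_same]; omega
  · rw [Finsupp.single_eq_of_ne' (Ne.symm hat)]
    by_contra h0
    have hsub : ({t, a} : Finset σ) ⊆ d.support := by
      intro x hx
      simp only [Finset.mem_insert, Finset.mem_singleton] at hx
      rcases hx with rfl | rfl <;> simp [Finsupp.mem_support_iff, ht, h0]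
    have : d t + d a ≤ Finsupp.degree d := by
      rw [Finsupp.degree, ← Finset.sum_pair (Ne.symm hat)]
      exact Finset.sum_le_sum_of_subset hsub
    omega

theorem eval_pt_add_of_homog1 {K : Type} [Field K] {N : ℕ} (L : MvPolynomial (Fin N) K)
    (hL : L.IsHomogeneous 1) (P Q : Fin N → K) :
    eval (fun t => P t + Q t) L = eval P L + eval Q L := by
  rw [eval_eq, eval_eq, eval_eq, ← Finset.sum_add_distrib]
  apply Finset.sum_congr rfl
  intro d hd
  have hdeg : Finsupp.degree d = 1 := by
    have := hL (mem_support_iff.mp hd)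
    rwa [Finsupp.degree_eq_weight_one]
  obtain ⟨t, rfl⟩ := deg_one_single d hdeg
  rw [Finsupp.support_single_ne_zero _ one_ne_zero]
  simp only [Finset.prod_singleton, Finsupp.single_eq_same, pow_one]
  ring

theorem polarW {K : Type} [Field K] {N : ℕ} (W L : MvPolynomial (Fin N) K)
    (hL : L.IsHomogeneous 1) (h : W = L ^ 2) (P Q : Fin N → K) :
    (eval (fun t => P t + Q t) W - eval P W - eval Q W) ^ 2
      = 4 * (eval P W * eval Q W) := by
  subst h
  simp only [map_pow]
  rw [eval_pt_add_of_homog1 L hL]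
  ring

theorem eval0_pderiv {K : Type} [Field K] {k : ℕ} (q : MvPolynomial (Fin k) K)
    (h : q.IsHomogeneous 3) (i : Fin k) :
    eval (fun _ => (0:K)) (pderiv i q) = 0 := by
  conv_lhs => rw [← support_sum_monomial_coeff q]
  rw [map_sum, map_sum]
  apply Finset.sum_eq_zero; intro d hd
  rw [pderiv_monomial]
  rcases eq_or_ne (d i) 0 with h0 | h0
  · simp [h0]
  · have hdeg : Finsupp.degree d = 3 := by
      have := h (mem_support_iff.mp hd)
      rwa [Finsupp.degree_eq_weight_one]
    have hne : d - Finsupp.single i 1 ≠ 0 := by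
      intro he
      have hle : ∀ j, d j ≤ Finsupp.single i 1 j := by
        intro j
        have := congrFun (congrArg (fun f : Fin k →₀ ℕ => (f : Fin k → ℕ)) he) j
        simp only [Finsupp.coe_tsub, Pi.sub_apply, Finsupp.coe_zero, Pi.zero_apply] at this
        omega
      have hsup : d.support ⊆ {i} := by
        intro j hj
        rw [Finsupp.mem_support_iff] at hj
        have := hle j
        rcases eq_or_ne j i with rfl | hji
        · exact Finset.mem_singleton_self j
        · rw [Finsupp.single_eq_of_ne' (Ne.symm hji)] at this; omega
      have hd2 : Finsupp.degree d ≤ d i := by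
        rw [Finsupp.degree]
        calc ∑ j ∈ d.support, d j ≤ ∑ j ∈ {i}, d j := Finset.sum_le_sum_of_subset hsup
          _ = d i := Finset.sum_singleton _ _
      have := hle i
      rw [Finsupp.single_eq_same] at this
      omega
    rw [eval_monomial]
    obtain ⟨j, hj⟩ := Finsupp.ne_iff.mp hne
    simp only [Finsupp.coe_zero, Pi.zero_apply] at hj
    have hjmem : j ∈ (d - Finsupp.single i 1).support := Finsupp.mem_support_iff.mpr hj
    rw [Finsupp.prod, Finset.prod_eq_zero hjmem (by rw [zero_pow hj]), mul_zero]

theorem mainW (K : Type) [Field K] (k s : ℕ) (hks : k ≤ s) (hsn : k + s + 1 ≤ k + s + 1)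
    (Q3 : MvPolynomial (Fin k) K) (v : Fin (k+s+1+1) → K) :
    (∑ t, v t • pderiv t (form1Poly K (k+s+1) k s hks hsn Q3)) =
      X (⟨0, by omega⟩ : Fin (k+s+1+1)) ^ 2 * C (v ⟨s+1, by omega⟩)
        + X (⟨s+1, by omega⟩ : Fin (k+s+1+1)) * (2 * (X (⟨0, by omega⟩ : Fin (k+s+1+1)) * C (v ⟨0, by omega⟩)))
        + (X (⟨0, by omega⟩ : Fin (k+s+1+1)) *
              ∑ x : Fin k, (X (⟨(x:ℕ)+1, by have := x.isLt; omega⟩ : Fin (k+s+1+1)) * C (v ⟨s+2+(x:ℕ), by have := x.isLt; omega⟩)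
                + X (⟨s+2+(x:ℕ), by have := x.isLt; omega⟩ : Fin (k+s+1+1)) * C (v ⟨(x:ℕ)+1, by have := x.isLt; omega⟩))
            + (∑ i : Fin k, X (⟨(i:ℕ)+1, by have := i.isLt; omega⟩ : Fin (k+s+1+1)) * X ⟨s+2+(i:ℕ), by have := i.isLt; omega⟩)
              * C (v ⟨0, by omega⟩))
        + (X (⟨0, by omega⟩ : Fin (k+s+1+1)) *
              ∑ x : Fin (s-k), 2 * (X (⟨k+1+(x:ℕ), by have := x.isLt; omega⟩ : Fin (k+s+1+1)) * C (v ⟨k+1+(x:ℕ), by have := x.isLt; omega⟩))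
            + (∑ j : Fin (s-k), X (⟨k+1+(j:ℕ), by have := j.isLt; omega⟩ : Fin (k+s+1+1)) ^ 2) * C (v ⟨0, by omega⟩))
        + rename (fun i : Fin k => (⟨(i:ℕ)+1, by have := i.isLt; omega⟩ : Fin (k+s+1+1)))
            (∑ i : Fin k, v ⟨(i:ℕ)+1, by have := i.isLt; omega⟩ • pderiv i Q3) := by
  rw [sum_smul_pderiv]
  simp only [form1Poly, map_add, map_sum, Derivation.leibniz, Derivation.leibniz_pow,
    mkDerivation_X, smul_eq_mul, pow_one, nsmul_eq_mul, Nat.cast_ofNat, mkDer_rename,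
    Nat.reduceSub]
  congr 1
  rw [← map_sum]
  congr 1
  exact (sum_smul_pderiv (fun i : Fin k => v ⟨(i:ℕ)+1, by have := i.isLt; omega⟩) Q3).symm


theorem evalW (K : Type) [Field K] (k s : ℕ) (hks : k ≤ s) (hsn : k + s + 1 ≤ k + s + 1)
    (Q3 : MvPolynomial (Fin k) K) (v : Fin (k+s+1+1) → K) (p : Fin (k+s+1+1) → K) :
    eval p (∑ t, v t • pderiv t (form1Poly K (k+s+1) k s hks hsn Q3)) =
      p ⟨0, by omega⟩ ^ 2 * v ⟨s+1, by omega⟩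
        + p ⟨s+1, by omega⟩ * (2 * (p ⟨0, by omega⟩ * v ⟨0, by omega⟩))
        + (p ⟨0, by omega⟩ * ∑ x : Fin k,
              (p ⟨(x:ℕ)+1, by have := x.isLt; omega⟩ * v ⟨s+2+(x:ℕ), by have := x.isLt; omega⟩
                + p ⟨s+2+(x:ℕ), by have := x.isLt; omega⟩ * v ⟨(x:ℕ)+1, by have := x.isLt; omega⟩)
            + (∑ x : Fin k, p ⟨(x:ℕ)+1, by have := x.isLt; omega⟩ * p ⟨s+2+(x:ℕ), by have := x.isLt; omega⟩)
              * v ⟨0, by omega⟩)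
        + (p ⟨0, by omega⟩ * ∑ x : Fin (s-k),
              2 * (p ⟨k+1+(x:ℕ), by have := x.isLt; omega⟩ * v ⟨k+1+(x:ℕ), by have := x.isLt; omega⟩)
            + (∑ x : Fin (s-k), p ⟨k+1+(x:ℕ), by have := x.isLt; omega⟩ ^ 2) * v ⟨0, by omega⟩)
        + ∑ x : Fin k, v ⟨(x:ℕ)+1, by have := x.isLt; omega⟩ *
            eval (fun i : Fin k => p ⟨(i:ℕ)+1, by have := i.isLt; omega⟩) (pderiv x Q3) := by
  rw [mainW]
  simp only [map_add, map_mul, map_sum, map_pow, map_ofNat, eval_C, eval_X, eval_rename,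
    smul_eval, Function.comp]
  rfl

theorem EA_gen (K : Type) [Field K] (k s : ℕ) (hks : k ≤ s) (hsn : k + s + 1 ≤ k + s + 1)
    (Q3 : MvPolynomial (Fin k) K) (hQ3 : Q3.IsHomogeneous 3)
    (v p : Fin (k+s+1+1) → K) (α γ : K)
    (hp : ∀ (a : ℕ) (h : a < k+s+1+1), p ⟨a, h⟩
      = α * (if a = 0 then 1 else 0) + γ * (if a = s+1 then 1 else 0)) :
    eval p (∑ t, v t • pderiv t (form1Poly K (k+s+1) k s hks hsn Q3))
      = α^2 * v ⟨s+1, by omega⟩ + 2*α*γ* v ⟨0, by omega⟩ := by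
  rw [evalW K k s hks hsn Q3 v p]
  simp only [hp]
  simp only [if_true]
  rw [if_neg (by omega : ¬(0:ℕ) = s+1), if_neg (by omega : ¬s+1 = 0)]
  rw [show (∑ x : Fin k,
        ((α * (if (x:ℕ)+1 = 0 then (1:K) else 0) + γ * (if (x:ℕ)+1 = s+1 then 1 else 0))
            * v ⟨s+2+(x:ℕ), by have := x.isLt; omega⟩
          + (α * (if s+2+(x:ℕ) = 0 then (1:K) else 0) + γ * (if s+2+(x:ℕ) = s+1 then 1 else 0))
            * v ⟨(x:ℕ)+1, by have := x.isLt; omega⟩)) = 0 from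
    Finset.sum_eq_zero fun x _ => by
      have hx := x.isLt
      rw [if_neg (by omega), if_neg (by omega), if_neg (by omega), if_neg (by omega)]; ring]
  rw [show (∑ x : Fin k,
        (α * (if (x:ℕ)+1 = 0 then (1:K) else 0) + γ * (if (x:ℕ)+1 = s+1 then 1 else 0))
          * (α * (if s+2+(x:ℕ) = 0 then (1:K) else 0) + γ * (if s+2+(x:ℕ) = s+1 then 1 else 0))) = 0 from
    Finset.sum_eq_zero fun x _ => by
      have hx := x.isLt
      rw [if_neg (by omega), if_neg (by omega), if_neg (by omega), if_neg (by omega)]; ring]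
  rw [show (∑ x : Fin (s-k),
        2 * ((α * (if k+1+(x:ℕ) = 0 then (1:K) else 0) + γ * (if k+1+(x:ℕ) = s+1 then 1 else 0))
          * v ⟨k+1+(x:ℕ), by have := x.isLt; omega⟩)) = 0 from
    Finset.sum_eq_zero fun x _ => by
      have hx := x.isLt
      rw [if_neg (by omega), if_neg (by omega)]; ring]
  rw [show (∑ x : Fin (s-k),
        (α * (if k+1+(x:ℕ) = 0 then (1:K) else 0) + γ * (if k+1+(x:ℕ) = s+1 then 1 else 0)) ^ 2) = 0 from
    Finset.sum_eq_zero fun x _ => by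
      have hx := x.isLt
      rw [if_neg (by omega), if_neg (by omega)]; ring]
  rw [show (fun i : Fin k => α * (if (i:ℕ)+1 = 0 then (1:K) else 0)
        + γ * (if (i:ℕ)+1 = s+1 then 1 else 0)) = (fun _ => (0:K)) from
    funext fun i => by
      have hi := i.isLt
      rw [if_neg (by omega), if_neg (by omega)]; ring]
  rw [show (∑ x : Fin k, v ⟨(x:ℕ)+1, by have := x.isLt; omega⟩
        * eval (fun _ => (0:K)) (pderiv x Q3)) = 0 from
    Finset.sum_eq_zero fun x _ => by rw [eval0_pderiv Q3 hQ3 x, mul_zero]]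
  ring

theorem EB_gen (K : Type) [Field K] (k s : ℕ) (hks : k ≤ s) (hsn : k + s + 1 ≤ k + s + 1)
    (Q3 : MvPolynomial (Fin k) K) (hQ3 : Q3.IsHomogeneous 3)
    (v p : Fin (k+s+1+1) → K) (α γ : K) (i' : Fin k)
    (hp : ∀ (a : ℕ) (h : a < k+s+1+1), p ⟨a, h⟩
      = α * (if a = 0 then 1 else 0) + γ * (if a = s+2+(i':ℕ) then 1 else 0)) :
    eval p (∑ t, v t • pderiv t (form1Poly K (k+s+1) k s hks hsn Q3))
      = α^2 * v ⟨s+1, by omega⟩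
        + α * γ * v ⟨(i':ℕ)+1, by have := i'.isLt; omega⟩ := by
  have hi' := i'.isLt
  rw [evalW K k s hks hsn Q3 v p]
  simp only [hp]
  simp only [if_true]
  rw [if_neg (by omega : ¬(0:ℕ) = s+2+(i':ℕ)), if_neg (by omega : ¬s+1 = 0),
    if_neg (by omega : ¬s+1 = s+2+(i':ℕ))]
  rw [show (∑ x : Fin k,
        ((α * (if (x:ℕ)+1 = 0 then (1:K) else 0) + γ * (if (x:ℕ)+1 = s+2+(i':ℕ) then 1 else 0))
            * v ⟨s+2+(x:ℕ), by have := x.isLt; omega⟩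
          + (α * (if s+2+(x:ℕ) = 0 then (1:K) else 0) + γ * (if s+2+(x:ℕ) = s+2+(i':ℕ) then 1 else 0))
            * v ⟨(x:ℕ)+1, by have := x.isLt; omega⟩))
      = γ * v ⟨(i':ℕ)+1, by have := i'.isLt; omega⟩ from
    (Finset.sum_eq_single i'
      (fun x _ hxne => by
        have hx := x.isLt
        have hne : (x:ℕ) ≠ (i':ℕ) := fun hh => hxne (Fin.ext hh)
        rw [if_neg (by omega), if_neg (by omega), if_neg (by omega), if_neg (by omega)]; ring)
      (fun h => absurd (Finset.mem_univ i') h)).trans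
      (by rw [if_neg (by omega), if_neg (by omega), if_neg (by omega),
            if_pos (rfl : s+2+(i':ℕ) = s+2+(i':ℕ))]; ring)]
  rw [show (∑ x : Fin k,
        (α * (if (x:ℕ)+1 = 0 then (1:K) else 0) + γ * (if (x:ℕ)+1 = s+2+(i':ℕ) then 1 else 0))
          * (α * (if s+2+(x:ℕ) = 0 then (1:K) else 0) + γ * (if s+2+(x:ℕ) = s+2+(i':ℕ) then 1 else 0))) = 0 from
    Finset.sum_eq_zero fun x _ => by
      have hx := x.isLt
      rw [if_neg (by omega), if_neg (by omega)]; ring]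
  rw [show (∑ x : Fin (s-k),
        2 * ((α * (if k+1+(x:ℕ) = 0 then (1:K) else 0) + γ * (if k+1+(x:ℕ) = s+2+(i':ℕ) then 1 else 0))
          * v ⟨k+1+(x:ℕ), by have := x.isLt; omega⟩)) = 0 from
    Finset.sum_eq_zero fun x _ => by
      have hx := x.isLt
      rw [if_neg (by omega), if_neg (by omega)]; ring]
  rw [show (∑ x : Fin (s-k),
        (α * (if k+1+(x:ℕ) = 0 then (1:K) else 0) + γ * (if k+1+(x:ℕ) = s+2+(i':ℕ) then 1 else 0)) ^ 2) = 0 from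
    Finset.sum_eq_zero fun x _ => by
      have hx := x.isLt
      rw [if_neg (by omega), if_neg (by omega)]; ring]
  rw [show (fun i : Fin k => α * (if (i:ℕ)+1 = 0 then (1:K) else 0)
        + γ * (if (i:ℕ)+1 = s+2+(i':ℕ) then 1 else 0)) = (fun _ => (0:K)) from
    funext fun i => by
      have hi := i.isLt
      rw [if_neg (by omega), if_neg (by omega)]; ring]
  rw [show (∑ x : Fin k, v ⟨(x:ℕ)+1, by have := x.isLt; omega⟩
        * eval (fun _ => (0:K)) (pderiv x Q3)) = 0 from
    Finset.sum_eq_zero fun x _ => by rw [eval0_pderiv Q3 hQ3 x, mul_zero]]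
  ring

theorem EC_gen (K : Type) [Field K] (k s : ℕ) (hks : k ≤ s) (hsn : k + s + 1 ≤ k + s + 1)
    (Q3 : MvPolynomial (Fin k) K) (hQ3 : Q3.IsHomogeneous 3)
    (v p : Fin (k+s+1+1) → K) (α γ : K) (j' : Fin (s-k))
    (hp : ∀ (a : ℕ) (h : a < k+s+1+1), p ⟨a, h⟩
      = α * (if a = 0 then 1 else 0) + γ * (if a = k+1+(j':ℕ) then 1 else 0)) :
    eval p (∑ t, v t • pderiv t (form1Poly K (k+s+1) k s hks hsn Q3))
      = α^2 * v ⟨s+1, by omega⟩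
        + 2 * α * γ * v ⟨k+1+(j':ℕ), by have := j'.isLt; omega⟩
        + γ^2 * v ⟨0, by omega⟩ := by
  have hj' := j'.isLt
  rw [evalW K k s hks hsn Q3 v p]
  simp only [hp]
  simp only [if_true]
  rw [if_neg (by omega : ¬(0:ℕ) = k+1+(j':ℕ)), if_neg (by omega : ¬s+1 = 0),
    if_neg (by omega : ¬s+1 = k+1+(j':ℕ))]
  rw [show (∑ x : Fin k,
        ((α * (if (x:ℕ)+1 = 0 then (1:K) else 0) + γ * (if (x:ℕ)+1 = k+1+(j':ℕ) then 1 else 0))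
            * v ⟨s+2+(x:ℕ), by have := x.isLt; omega⟩
          + (α * (if s+2+(x:ℕ) = 0 then (1:K) else 0) + γ * (if s+2+(x:ℕ) = k+1+(j':ℕ) then 1 else 0))
            * v ⟨(x:ℕ)+1, by have := x.isLt; omega⟩)) = 0 from
    Finset.sum_eq_zero fun x _ => by
      have hx := x.isLt
      rw [if_neg (by omega), if_neg (by omega), if_neg (by omega), if_neg (by omega)]; ring]
  rw [show (∑ x : Fin k,
        (α * (if (x:ℕ)+1 = 0 then (1:K) else 0) + γ * (if (x:ℕ)+1 = k+1+(j':ℕ) then 1 else 0))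
          * (α * (if s+2+(x:ℕ) = 0 then (1:K) else 0) + γ * (if s+2+(x:ℕ) = k+1+(j':ℕ) then 1 else 0))) = 0 from
    Finset.sum_eq_zero fun x _ => by
      have hx := x.isLt
      rw [if_neg (by omega), if_neg (by omega), if_neg (by omega), if_neg (by omega)]; ring]
  rw [show (∑ x : Fin (s-k),
        2 * ((α * (if k+1+(x:ℕ) = 0 then (1:K) else 0) + γ * (if k+1+(x:ℕ) = k+1+(j':ℕ) then 1 else 0))
          * v ⟨k+1+(x:ℕ), by have := x.isLt; omega⟩))
      = 2 * (γ * v ⟨k+1+(j':ℕ), by have := j'.isLt; omega⟩) from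
    (Finset.sum_eq_single j'
      (fun x _ hxne => by
        have hx := x.isLt
        have hne : (x:ℕ) ≠ (j':ℕ) := fun hh => hxne (Fin.ext hh)
        rw [if_neg (by omega), if_neg (by omega)]; ring)
      (fun h => absurd (Finset.mem_univ j') h)).trans
      (by rw [if_neg (by omega), if_pos (rfl : k+1+(j':ℕ) = k+1+(j':ℕ))]; ring)]
  rw [show (∑ x : Fin (s-k),
        (α * (if k+1+(x:ℕ) = 0 then (1:K) else 0) + γ * (if k+1+(x:ℕ) = k+1+(j':ℕ) then 1 else 0)) ^ 2)
      = γ^2 from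
    (Finset.sum_eq_single j'
      (fun x _ hxne => by
        have hx := x.isLt
        have hne : (x:ℕ) ≠ (j':ℕ) := fun hh => hxne (Fin.ext hh)
        rw [if_neg (by omega), if_neg (by omega)]; ring)
      (fun h => absurd (Finset.mem_univ j') h)).trans
      (by rw [if_neg (by omega), if_pos (rfl : k+1+(j':ℕ) = k+1+(j':ℕ))]; ring)]
  rw [show (fun i : Fin k => α * (if (i:ℕ)+1 = 0 then (1:K) else 0)
        + γ * (if (i:ℕ)+1 = k+1+(j':ℕ) then 1 else 0)) = (fun _ => (0:K)) from
    funext fun i => by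
      have hi := i.isLt
      rw [if_neg (by omega), if_neg (by omega)]; ring]
  rw [show (∑ x : Fin k, v ⟨(x:ℕ)+1, by have := x.isLt; omega⟩
        * eval (fun _ => (0:K)) (pderiv x Q3)) = 0 from
    Finset.sum_eq_zero fun x _ => by rw [eval0_pderiv Q3 hQ3 x, mul_zero]]
  ring

theorem ED_gen (K : Type) [Field K] (k s : ℕ) (hks : k ≤ s) (hsn : k + s + 1 ≤ k + s + 1)
    (Q3 : MvPolynomial (Fin k) K) (hQ3 : Q3.IsHomogeneous 3)
    (v p : Fin (k+s+1+1) → K) (α γ : K) (i' : Fin k)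
    (hzero : ∀ x : Fin k, v ⟨(x:ℕ)+1, by have := x.isLt; omega⟩ = 0)
    (hp : ∀ (a : ℕ) (h : a < k+s+1+1), p ⟨a, h⟩
      = α * (if a = 0 then 1 else 0) + γ * (if a = (i':ℕ)+1 then 1 else 0)) :
    eval p (∑ t, v t • pderiv t (form1Poly K (k+s+1) k s hks hsn Q3))
      = α^2 * v ⟨s+1, by omega⟩
        + α * γ * v ⟨s+2+(i':ℕ), by have := i'.isLt; omega⟩ := by
  have hi' := i'.isLt
  rw [evalW K k s hks hsn Q3 v p]
  simp only [hp]
  simp only [if_true]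
  rw [if_neg (by omega : ¬(0:ℕ) = (i':ℕ)+1), if_neg (by omega : ¬s+1 = 0),
    if_neg (by omega : ¬s+1 = (i':ℕ)+1)]
  rw [show (∑ x : Fin k,
        ((α * (if (x:ℕ)+1 = 0 then (1:K) else 0) + γ * (if (x:ℕ)+1 = (i':ℕ)+1 then 1 else 0))
            * v ⟨s+2+(x:ℕ), by have := x.isLt; omega⟩
          + (α * (if s+2+(x:ℕ) = 0 then (1:K) else 0) + γ * (if s+2+(x:ℕ) = (i':ℕ)+1 then 1 else 0))
            * v ⟨(x:ℕ)+1, by have := x.isLt; omega⟩))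
      = γ * v ⟨s+2+(i':ℕ), by have := i'.isLt; omega⟩ from
    (Finset.sum_eq_single i'
      (fun x _ hxne => by
        have hx := x.isLt
        have hne : (x:ℕ) ≠ (i':ℕ) := fun hh => hxne (Fin.ext hh)
        rw [if_neg (by omega), if_neg (by omega), if_neg (by omega), if_neg (by omega)]; ring)
      (fun h => absurd (Finset.mem_univ i') h)).trans
      (by rw [if_neg (by omega), if_pos (rfl : (i':ℕ)+1 = (i':ℕ)+1), if_neg (by omega),
            if_neg (by omega)]; ring)]
  rw [show (∑ x : Fin k,
        (α * (if (x:ℕ)+1 = 0 then (1:K) else 0) + γ * (if (x:ℕ)+1 = (i':ℕ)+1 then 1 else 0))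
          * (α * (if s+2+(x:ℕ) = 0 then (1:K) else 0) + γ * (if s+2+(x:ℕ) = (i':ℕ)+1 then 1 else 0))) = 0 from
    Finset.sum_eq_zero fun x _ => by
      have hx := x.isLt
      rw [if_neg (by omega : ¬s+2+(x:ℕ) = 0), if_neg (by omega : ¬s+2+(x:ℕ) = (i':ℕ)+1)]; ring]
  rw [show (∑ x : Fin (s-k),
        2 * ((α * (if k+1+(x:ℕ) = 0 then (1:K) else 0) + γ * (if k+1+(x:ℕ) = (i':ℕ)+1 then 1 else 0))
          * v ⟨k+1+(x:ℕ), by have := x.isLt; omega⟩)) = 0 from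
    Finset.sum_eq_zero fun x _ => by
      have hx := x.isLt
      rw [if_neg (by omega), if_neg (by omega)]; ring]
  rw [show (∑ x : Fin (s-k),
        (α * (if k+1+(x:ℕ) = 0 then (1:K) else 0) + γ * (if k+1+(x:ℕ) = (i':ℕ)+1 then 1 else 0)) ^ 2) = 0 from
    Finset.sum_eq_zero fun x _ => by
      have hx := x.isLt
      rw [if_neg (by omega), if_neg (by omega)]; ring]
  rw [show (∑ x : Fin k, v ⟨(x:ℕ)+1, by have := x.isLt; omega⟩
        * eval (fun i : Fin k => α * (if (i:ℕ)+1 = 0 then (1:K) else 0)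
            + γ * (if (i:ℕ)+1 = (i':ℕ)+1 then 1 else 0)) (pderiv x Q3)) = 0 from
    Finset.sum_eq_zero fun x _ => by rw [hzero x, zero_mul]]
  ring

/-- cf. Lemma `l_x0`. For a cubic form `Q` of form (1) with
`k + s + 1 = n`, the directional derivative `D_v Q` of a nonzero vector `v` is the
square of a linear form exactly when `v` is a scalar multiple of the coordinate
direction of `y₀` (the variable `X (s+1)`); in that case `D_v Q` is the corresponding
scalar multiple of `x₀²`. -/
theorem stmt10 (K : Type) [Field K] [IsAlgClosed K] [CharZero K] (n k s : ℕ)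
    (hk : 1 ≤ k) (hks : k ≤ s) (heq : k + s + 1 = n)
    (Q3 : MvPolynomial (Fin k) K) (hQ3hom : Q3.IsHomogeneous 3) (hQ3nd : NondegCubic Q3)
    (Q : MvPolynomial (Fin (n + 1)) K) (hQ : Q = form1Poly K n k s hks heq.le Q3) :
    ∀ v : Fin (n + 1) → K, v ≠ 0 →
      ((∃ L : MvPolynomial (Fin (n + 1)) K, L.IsHomogeneous 1 ∧
          (∑ i, v i • pderiv i Q) = L ^ 2) ↔
        ∃ c : K, v = c • (Pi.single (⟨s + 1, by omega⟩ : Fin (n + 1)) (1 : K) : Fin (n + 1) → K)) ∧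
      (∀ c : K, v = c • (Pi.single (⟨s + 1, by omega⟩ : Fin (n + 1)) (1 : K) : Fin (n + 1) → K) →
        (∑ i, v i • pderiv i Q) = c • X (⟨0, by omega⟩ : Fin (n + 1)) ^ 2) := by
  subst hQ
  subst heq
  intro v hv
  -- Part 2: explicit computation when `v = c • e_{y₀}`.
  have hpart2 : ∀ c : K,
      v = c • (Pi.single (⟨s + 1, by omega⟩ : Fin (k+s+1+1)) (1 : K) : Fin (k+s+1+1) → K) →
      (∑ i, v i • pderiv i (form1Poly K (k+s+1) k s hks le_rfl Q3))
        = c • X (⟨0, by omega⟩ : Fin (k+s+1+1)) ^ 2 := by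
    intro c hc
    have hcomp : ∀ (a : ℕ) (h : a < k+s+1+1), v ⟨a, h⟩ = if a = s+1 then c else 0 := by
      intro a h
      rw [hc]
      simp only [Pi.smul_apply, smul_eq_mul]
      rcases eq_or_ne a (s+1) with he | he
      · rw [if_pos he]
        have heq2 : (⟨a, h⟩ : Fin (k+s+1+1)) = ⟨s+1, by omega⟩ := by
          rw [Fin.mk.injEq]; exact he
        rw [heq2, Pi.single_eq_same, mul_one]
      · rw [if_neg he, Pi.single_eq_of_ne (Fin.ne_of_val_ne he), mul_zero]
    rw [mainW K k s hks le_rfl Q3 v]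
    rw [show v ⟨0, by omega⟩ = 0 from (hcomp 0 (by omega)).trans (if_neg (by omega))]
    rw [show v ⟨s+1, by omega⟩ = c from (hcomp (s+1) (by omega)).trans (if_pos rfl)]
    rw [show (∑ x : Fin k,
          (X (⟨(x:ℕ)+1, by have := x.isLt; omega⟩ : Fin (k+s+1+1))
              * C (v ⟨s+2+(x:ℕ), by have := x.isLt; omega⟩)
            + X (⟨s+2+(x:ℕ), by have := x.isLt; omega⟩ : Fin (k+s+1+1))
              * C (v ⟨(x:ℕ)+1, by have := x.isLt; omega⟩))) = 0 from
      Finset.sum_eq_zero fun x _ => by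
        have hx := x.isLt
        rw [(hcomp (s+2+(x:ℕ)) (by omega)).trans (if_neg (by omega)),
          (hcomp ((x:ℕ)+1) (by omega)).trans (if_neg (by omega)), map_zero, mul_zero, mul_zero,
          add_zero]]
    rw [show (∑ x : Fin (s-k),
          2 * (X (⟨k+1+(x:ℕ), by have := x.isLt; omega⟩ : Fin (k+s+1+1))
            * C (v ⟨k+1+(x:ℕ), by have := x.isLt; omega⟩))) = 0 from
      Finset.sum_eq_zero fun x _ => by
        have hx := x.isLt
        rw [(hcomp (k+1+(x:ℕ)) (by omega)).trans (if_neg (by omega)), map_zero, mul_zero,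
          mul_zero]]
    rw [show (∑ i : Fin k, v ⟨(i:ℕ)+1, by have := i.isLt; omega⟩ • pderiv i Q3) = 0 from
      Finset.sum_eq_zero fun i _ => by
        have hi := i.isLt
        rw [(hcomp ((i:ℕ)+1) (by omega)).trans (if_neg (by omega)), zero_smul]]
    rw [map_zero, map_zero, smul_eq_C_mul]
    ring
  constructor
  · constructor
    · -- forward direction
      rintro ⟨L, hL1, hL2⟩
      have hpolar := polarW _ L hL1 hL2
      have eQ0 := EA_gen K k s hks le_rfl Q3 hQ3hom v
        (fun t : Fin (k+s+1+1) => if (t:ℕ) = 0 then (1:K) else 0) 1 0 (fun a h => by simp)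
      -- Step A : v ⟨0⟩ = 0
      have ha : v ⟨0, by omega⟩ = 0 := by
        have ePA := EA_gen K k s hks le_rfl Q3 hQ3hom v
          (fun t : Fin (k+s+1+1) => if (t:ℕ) = s+1 then (1:K) else 0) 0 1 (fun a h => by simp)
        have ePAQ := EA_gen K k s hks le_rfl Q3 hQ3hom v
          (fun t : Fin (k+s+1+1) =>
            (if (t:ℕ) = s+1 then (1:K) else 0) + (if (t:ℕ) = 0 then (1:K) else 0)) 1 1
          (fun a h => by simp [add_comm])
        have hA := hpolar (fun t : Fin (k+s+1+1) => if (t:ℕ) = s+1 then (1:K) else 0)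
          (fun t : Fin (k+s+1+1) => if (t:ℕ) = 0 then (1:K) else 0)
        rw [ePAQ, ePA, eQ0] at hA
        have h4 : (2 * v ⟨0, by omega⟩) ^ 2 = 0 := by linear_combination hA
        have h5 := (pow_eq_zero_iff (by norm_num : (2:ℕ) ≠ 0)).mp h4
        rcases mul_eq_zero.mp h5 with h6 | h6
        · exact absurd h6 two_ne_zero
        · exact h6
      -- Step B : v ⟨i+1⟩ = 0
      have hb : ∀ i' : Fin k, v ⟨(i':ℕ)+1, by have := i'.isLt; omega⟩ = 0 := by
        intro i'
        have eP := EB_gen K k s hks le_rfl Q3 hQ3hom v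
          (fun t : Fin (k+s+1+1) => if (t:ℕ) = s+2+(i':ℕ) then (1:K) else 0) 0 1 i'
          (fun a h => by simp)
        have ePQ := EB_gen K k s hks le_rfl Q3 hQ3hom v
          (fun t : Fin (k+s+1+1) =>
            (if (t:ℕ) = s+2+(i':ℕ) then (1:K) else 0) + (if (t:ℕ) = 0 then (1:K) else 0)) 1 1 i'
          (fun a h => by simp [add_comm])
        have hA := hpolar
          (fun t : Fin (k+s+1+1) => if (t:ℕ) = s+2+(i':ℕ) then (1:K) else 0)
          (fun t : Fin (k+s+1+1) => if (t:ℕ) = 0 then (1:K) else 0)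
        rw [ePQ, eP, eQ0] at hA
        have h4 : (v ⟨(i':ℕ)+1, by have := i'.isLt; omega⟩) ^ 2 = 0 := by linear_combination hA
        exact (pow_eq_zero_iff (by norm_num : (2:ℕ) ≠ 0)).mp h4
      -- Step C : v ⟨k+1+j⟩ = 0
      have hcz : ∀ j' : Fin (s-k), v ⟨k+1+(j':ℕ), by have := j'.isLt; omega⟩ = 0 := by
        intro j'
        have eP := EC_gen K k s hks le_rfl Q3 hQ3hom v
          (fun t : Fin (k+s+1+1) => if (t:ℕ) = k+1+(j':ℕ) then (1:K) else 0) 0 1 j'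
          (fun a h => by simp)
        have ePQ := EC_gen K k s hks le_rfl Q3 hQ3hom v
          (fun t : Fin (k+s+1+1) =>
            (if (t:ℕ) = k+1+(j':ℕ) then (1:K) else 0) + (if (t:ℕ) = 0 then (1:K) else 0)) 1 1 j'
          (fun a h => by simp [add_comm])
        have hA := hpolar
          (fun t : Fin (k+s+1+1) => if (t:ℕ) = k+1+(j':ℕ) then (1:K) else 0)
          (fun t : Fin (k+s+1+1) => if (t:ℕ) = 0 then (1:K) else 0)
        rw [ePQ, eP, eQ0] at hA
        have h4 : (2 * v ⟨k+1+(j':ℕ), by have := j'.isLt; omega⟩) ^ 2 = 0 := by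
          linear_combination hA + (4 * v ⟨s+1, by omega⟩) * ha
        have h5 := (pow_eq_zero_iff (by norm_num : (2:ℕ) ≠ 0)).mp h4
        rcases mul_eq_zero.mp h5 with h6 | h6
        · exact absurd h6 two_ne_zero
        · exact h6
      -- Step D : v ⟨s+2+i⟩ = 0
      have hy : ∀ i' : Fin k, v ⟨s+2+(i':ℕ), by have := i'.isLt; omega⟩ = 0 := by
        intro i'
        have eP := ED_gen K k s hks le_rfl Q3 hQ3hom v
          (fun t : Fin (k+s+1+1) => if (t:ℕ) = (i':ℕ)+1 then (1:K) else 0) 0 1 i' hb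
          (fun a h => by simp)
        have ePQ := ED_gen K k s hks le_rfl Q3 hQ3hom v
          (fun t : Fin (k+s+1+1) =>
            (if (t:ℕ) = (i':ℕ)+1 then (1:K) else 0) + (if (t:ℕ) = 0 then (1:K) else 0)) 1 1 i' hb
          (fun a h => by simp [add_comm])
        have hA := hpolar
          (fun t : Fin (k+s+1+1) => if (t:ℕ) = (i':ℕ)+1 then (1:K) else 0)
          (fun t : Fin (k+s+1+1) => if (t:ℕ) = 0 then (1:K) else 0)
        rw [ePQ, eP, eQ0] at hA
        have h4 : (v ⟨s+2+(i':ℕ), by have := i'.isLt; omega⟩) ^ 2 = 0 := by linear_combination hA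
        exact (pow_eq_zero_iff (by norm_num : (2:ℕ) ≠ 0)).mp h4
      -- conclude
      refine ⟨v ⟨s+1, by omega⟩, funext fun t => ?_⟩
      obtain ⟨tv, htv⟩ := t
      simp only [Pi.smul_apply, smul_eq_mul]
      have hs : (Pi.single (⟨s+1, by omega⟩ : Fin (k+s+1+1)) (1:K) : Fin (k+s+1+1) → K) ⟨tv, htv⟩
          = if tv = s+1 then 1 else 0 := by
        rcases eq_or_ne tv (s+1) with he | he
        · rw [if_pos he]
          have heq2 : (⟨tv, htv⟩ : Fin (k+s+1+1)) = ⟨s+1, by omega⟩ := by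
            rw [Fin.mk.injEq]; exact he
          rw [heq2, Pi.single_eq_same]
        · rw [if_neg he, Pi.single_eq_of_ne (Fin.ne_of_val_ne he)]
      rw [hs]
      rcases (by omega : tv = 0 ∨ (1 ≤ tv ∧ tv ≤ k) ∨ (k+1 ≤ tv ∧ tv ≤ s) ∨ tv = s+1
          ∨ (s+2 ≤ tv ∧ tv ≤ k+s+1)) with h | h | h | h | h
      · rw [if_neg (by omega), mul_zero]
        have heq2 : (⟨tv, htv⟩ : Fin (k+s+1+1)) = ⟨0, by omega⟩ := by
          rw [Fin.mk.injEq]; exact h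
        rw [heq2]; exact ha
      · rw [if_neg (by omega), mul_zero]
        have heq2 : (⟨tv, htv⟩ : Fin (k+s+1+1))
            = ⟨((⟨tv-1, by omega⟩ : Fin k) : ℕ)+1, by omega⟩ := by
          rw [Fin.mk.injEq]; show tv = (tv-1)+1; omega
        rw [heq2]; exact hb ⟨tv-1, by omega⟩
      · rw [if_neg (by omega), mul_zero]
        have heq2 : (⟨tv, htv⟩ : Fin (k+s+1+1))
            = ⟨k+1+((⟨tv-(k+1), by omega⟩ : Fin (s-k)) : ℕ), by omega⟩ := by
          rw [Fin.mk.injEq]; show tv = k+1+(tv-(k+1)); omega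
        rw [heq2]; exact hcz ⟨tv-(k+1), by omega⟩
      · rw [if_pos h, mul_one]
        have heq2 : (⟨tv, htv⟩ : Fin (k+s+1+1)) = ⟨s+1, by omega⟩ := by
          rw [Fin.mk.injEq]; exact h
        rw [heq2]
      · rw [if_neg (by omega), mul_zero]
        have heq2 : (⟨tv, htv⟩ : Fin (k+s+1+1))
            = ⟨s+2+((⟨tv-(s+2), by omega⟩ : Fin k) : ℕ), by omega⟩ := by
          rw [Fin.mk.injEq]; show tv = s+2+(tv-(s+2)); omega
        rw [heq2]; exact hy ⟨tv-(s+2), by omega⟩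
    · -- reverse direction
      rintro ⟨c, hc⟩
      obtain ⟨r, hr⟩ := IsAlgClosed.exists_pow_nat_eq (k := K) c (n := 2) (by norm_num)
      refine ⟨C r * X ⟨0, by omega⟩, isHomogeneous_C_mul_X r _, ?_⟩
      rw [hpart2 c hc, ← hr, smul_eq_C_mul, map_pow]
      ring
  · exact hpart2
end

section
/- Let k be a field of characteristic 0 and let V = k·1 ⊕ H ⊕ k·b0 be a finite-dimensional k-vector space with a distinguished vector 1, a subspace H, and a vector b0; let y0 : V → k be the linear functional with y0(b0) = 1 and y0(k·1 ⊕ H) = 0. Suppose · and ∗ are two bilinear multiplications each making V a commutative associative unital local k-algebra with unit 1 and maximal ideal m = H ⊕ k·b0, such that for each multiplication b0 ∈ m³ and y0 vanishes on m⁴. Suppose moreover that y0(a·b) = y0(a∗b) and y0(a·b·c) = y0(a∗b∗c) for all a, b, c ∈ H. If the bilinear form (a, b) ↦ y0(a·b) on H is non-degenerate, then the two multiplications coincide: a·b = a∗b for all a, b ∈ V. -/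
/-- cf. Lemma `lemma_2`. Let `V = K·1 ⊕ H ⊕ K·b0` and let `μ`, `ν` be
two bilinear multiplications each making `V` a commutative associative unital local
`K`-algebra with unit `one` and maximal ideal `M = H ⊕ K·b0`, such that (for each
multiplication) `b0 ∈ M³` and `y0` vanishes on `M⁴`. If `y0(a·b) = y0(a∗b)` and
`y0(a·b·c) = y0(a∗b∗c)` for all `a,b,c ∈ H`, and the form `(a,b) ↦ y0(a·b)` is
non-degenerate on `H`, then `μ = ν`. -/
theorem stmt11 (K : Type) [Field K] [CharZero K]
    (V : Type) [AddCommGroup V] [Module K V] [FiniteDimensional K V]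
    (one b0 : V) (H : Submodule K V)
    (y0 : V →ₗ[K] K) (hy0b0 : y0 b0 = 1) (hy0one : y0 one = 0) (hy0H : ∀ h ∈ H, y0 h = 0)
    (hspan : Submodule.span K {one} ⊔ H ⊔ Submodule.span K {b0} = ⊤)
    (hindep : ∀ (c d : K) (h : V), h ∈ H → c • one + h + d • b0 = 0 →
      c = 0 ∧ h = 0 ∧ d = 0)
    (μ ν : V →ₗ[K] V →ₗ[K] V)
    -- `μ` is a commutative associative unital multiplication
    (hμcomm : ∀ a b : V, μ a b = μ b a)
    (hμassoc : ∀ a b c : V, μ (μ a b) c = μ a (μ b c))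
    (hμone : ∀ a : V, μ one a = a)
    -- `ν` is a commutative associative unital multiplication
    (hνcomm : ∀ a b : V, ν a b = ν b a)
    (hνassoc : ∀ a b c : V, ν (ν a b) c = ν a (ν b c))
    (hνone : ∀ a : V, ν one a = a)
    -- `M = H ⊕ K·b0` is an ideal for both multiplications, and every element outside
    -- it is invertible (so each algebra is local with maximal ideal `M`)
    (hμideal : ∀ x ∈ H ⊔ Submodule.span K {b0}, ∀ v : V, μ v x ∈ H ⊔ Submodule.span K {b0})
    (hμunit : ∀ x : V, x ∉ H ⊔ Submodule.span K {b0} → ∃ y : V, μ x y = one)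
    (hνideal : ∀ x ∈ H ⊔ Submodule.span K {b0}, ∀ v : V, ν v x ∈ H ⊔ Submodule.span K {b0})
    (hνunit : ∀ x : V, x ∉ H ⊔ Submodule.span K {b0} → ∃ y : V, ν x y = one)
    -- `b0 ∈ M³` for both multiplications
    (hμb0 : b0 ∈ Submodule.span K {w : V | ∃ x ∈ H ⊔ Submodule.span K {b0},
      ∃ y ∈ H ⊔ Submodule.span K {b0}, ∃ z ∈ H ⊔ Submodule.span K {b0}, w = μ x (μ y z)})
    (hνb0 : b0 ∈ Submodule.span K {w : V | ∃ x ∈ H ⊔ Submodule.span K {b0},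
      ∃ y ∈ H ⊔ Submodule.span K {b0}, ∃ z ∈ H ⊔ Submodule.span K {b0}, w = ν x (ν y z)})
    -- `y0` vanishes on `M⁴` for both multiplications
    (hμm4 : ∀ x ∈ H ⊔ Submodule.span K {b0}, ∀ y ∈ H ⊔ Submodule.span K {b0},
      ∀ z ∈ H ⊔ Submodule.span K {b0}, ∀ w ∈ H ⊔ Submodule.span K {b0},
        y0 (μ x (μ y (μ z w))) = 0)
    (hνm4 : ∀ x ∈ H ⊔ Submodule.span K {b0}, ∀ y ∈ H ⊔ Submodule.span K {b0},
      ∀ z ∈ H ⊔ Submodule.span K {b0}, ∀ w ∈ H ⊔ Submodule.span K {b0},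
        y0 (ν x (ν y (ν z w))) = 0)
    -- the two multiplications agree under `y0` on products of two and three elements of `H`
    (hagree2 : ∀ a ∈ H, ∀ b ∈ H, y0 (μ a b) = y0 (ν a b))
    (hagree3 : ∀ a ∈ H, ∀ b ∈ H, ∀ c ∈ H, y0 (μ a (μ b c)) = y0 (ν a (ν b c)))
    -- the bilinear form `(a,b) ↦ y0(a·b)` is non-degenerate on `H`
    (hnd : ∀ a ∈ H, (∀ b ∈ H, y0 (μ a b) = 0) → a = 0) :
    μ = ν := by
  set M : Submodule K V := H ⊔ Submodule.span K {b0} with hMdef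
  have hHM : ∀ h ∈ H, h ∈ M := fun h hh => Submodule.mem_sup_left hh
  have hb0M : b0 ∈ M := Submodule.mem_sup_right (Submodule.mem_span_singleton_self b0)
  -- y0 kills μ m b0 for m ∈ M
  have hy0μb0 : ∀ m ∈ M, y0 (μ m b0) = 0 := by
    intro m hm
    have hle : Submodule.span K {w : V | ∃ x ∈ M, ∃ y ∈ M, ∃ z ∈ M, w = μ x (μ y z)}
        ≤ LinearMap.ker (y0.comp (μ m)) := by
      rw [Submodule.span_le]
      rintro w ⟨x, hx, y, hy, z, hz, rfl⟩
      simp only [SetLike.mem_coe, LinearMap.mem_ker, LinearMap.comp_apply]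
      exact hμm4 m hm x hx y hy z hz
    simpa using hle hμb0
  have hy0νb0 : ∀ m ∈ M, y0 (ν m b0) = 0 := by
    intro m hm
    have hle : Submodule.span K {w : V | ∃ x ∈ M, ∃ y ∈ M, ∃ z ∈ M, w = ν x (ν y z)}
        ≤ LinearMap.ker (y0.comp (ν m)) := by
      rw [Submodule.span_le]
      rintro w ⟨x, hx, y, hy, z, hz, rfl⟩
      simp only [SetLike.mem_coe, LinearMap.mem_ker, LinearMap.comp_apply]
      exact hνm4 m hm x hx y hy z hz
    simpa using hle hνb0
  -- decomposition of elements of M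
  have hdecM : ∀ v ∈ M, ∃ h ∈ H, ∃ d : K, v = h + d • b0 := by
    intro v hv
    rcases Submodule.mem_sup.mp hv with ⟨h, hh, s, hs, rfl⟩
    rcases Submodule.mem_span_singleton.mp hs with ⟨d, rfl⟩
    exact ⟨h, hh, d, rfl⟩
  -- products with b0 vanish
  have hμmb0 : ∀ m ∈ M, μ m b0 = 0 := by
    intro m hm
    obtain ⟨h, hh, d, heq⟩ := hdecM (μ m b0) (hμideal b0 hb0M m)
    have hd : d = 0 := by
      have h0 := hy0μb0 m hm
      rw [heq] at h0
      simpa [hy0H h hh, hy0b0] using h0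
    have hhe : μ m b0 = h := by rw [heq, hd, zero_smul, add_zero]
    have hzero : h = 0 := by
      apply hnd h hh
      intro c hc
      rw [← hhe, hμassoc m b0 c, hμcomm b0 c, ← hμassoc m c b0]
      exact hy0μb0 (μ m c) (hμideal c (hHM c hc) m)
    rw [hhe]; exact hzero
  have hνmb0 : ∀ m ∈ M, ν m b0 = 0 := by
    intro m hm
    obtain ⟨h, hh, d, heq⟩ := hdecM (ν m b0) (hνideal b0 hb0M m)
    have hd : d = 0 := by
      have h0 := hy0νb0 m hm
      rw [heq] at h0
      simpa [hy0H h hh, hy0b0] using h0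
    have hhe : ν m b0 = h := by rw [heq, hd, zero_smul, add_zero]
    have hzero : h = 0 := by
      apply hnd h hh
      intro c hc
      rw [hagree2 h hh c hc, ← hhe, hνassoc m b0 c, hνcomm b0 c, ← hνassoc m c b0]
      exact hy0νb0 (ν m c) (hνideal c (hHM c hc) m)
    rw [hhe]; exact hzero
  -- μ and ν agree on H × H
  have hHH : ∀ a ∈ H, ∀ b ∈ H, μ a b = ν a b := by
    intro a ha b hb
    obtain ⟨h1, hh1, d1, he1⟩ := hdecM (μ a b) (hμideal b (hHM b hb) a)
    obtain ⟨h2, hh2, d2, he2⟩ := hdecM (ν a b) (hνideal b (hHM b hb) a)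
    have hd1 : y0 (μ a b) = d1 := by rw [he1]; simp [hy0H h1 hh1, hy0b0]
    have hd2 : y0 (ν a b) = d2 := by rw [he2]; simp [hy0H h2 hh2, hy0b0]
    have hdd : d1 = d2 := by rw [← hd1, ← hd2, hagree2 a ha b hb]
    have hform : ∀ c ∈ H, y0 (μ h1 c) = y0 (μ h2 c) := by
      intro c hc
      have hb0c : y0 (μ b0 c) = 0 := by
        rw [hμcomm]; exact hy0μb0 c (hHM c hc)
      have hb0c' : y0 (ν b0 c) = 0 := by
        rw [hνcomm]; exact hy0νb0 c (hHM c hc)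
      have e1 : y0 (μ h1 c) = y0 (μ a (μ b c)) := by
        rw [← hμassoc a b c, he1]
        simp [map_add, map_smul, LinearMap.add_apply, LinearMap.smul_apply, hb0c]
      have e2 : y0 (ν h2 c) = y0 (ν a (ν b c)) := by
        rw [← hνassoc a b c, he2]
        simp [map_add, map_smul, LinearMap.add_apply, LinearMap.smul_apply, hb0c']
      rw [e1, hagree3 a ha b hb c hc, hagree2 h2 hh2 c hc, e2]
    have hsub : h1 - h2 = 0 := by
      apply hnd (h1 - h2) (sub_mem hh1 hh2)
      intro c hc
      have : μ (h1 - h2) c = μ h1 c - μ h2 c := by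
        simp [map_sub, LinearMap.sub_apply]
      rw [this, map_sub, hform c hc, sub_self]
    have h12 : h1 = h2 := by rwa [sub_eq_zero] at hsub
    rw [he1, he2, h12, hdd]
  -- μ and ν agree on M × M
  have hMM : ∀ x ∈ M, ∀ y ∈ M, μ x y = ν x y := by
    intro x hx y hy
    obtain ⟨h, hh, d, rfl⟩ := hdecM x hx
    obtain ⟨h', hh', d', rfl⟩ := hdecM y hy
    have z1 : μ h b0 = 0 := hμmb0 h (hHM h hh)
    have z2 : μ b0 h' = 0 := by rw [hμcomm]; exact hμmb0 h' (hHM h' hh')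
    have z3 : μ b0 b0 = 0 := hμmb0 b0 hb0M
    have w1 : ν h b0 = 0 := hνmb0 h (hHM h hh)
    have w2 : ν b0 h' = 0 := by rw [hνcomm]; exact hνmb0 h' (hHM h' hh')
    have w3 : ν b0 b0 = 0 := hνmb0 b0 hb0M
    simp [map_add, map_smul, LinearMap.add_apply, LinearMap.smul_apply,
      z1, z2, z3, w1, w2, w3, hHH h hh h' hh']
  -- decomposition of arbitrary elements
  have hdecV : ∀ v : V, ∃ c : K, ∃ m ∈ M, v = c • one + m := by
    intro v
    have hv : v ∈ Submodule.span K {one} ⊔ H ⊔ Submodule.span K {b0} := by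
      rw [hspan]; exact Submodule.mem_top
    rcases Submodule.mem_sup.mp hv with ⟨u, hu, s, hs, rfl⟩
    rcases Submodule.mem_sup.mp hu with ⟨t, ht, h, hh, rfl⟩
    rcases Submodule.mem_span_singleton.mp ht with ⟨c, rfl⟩
    exact ⟨c, h + s, add_mem (hHM h hh) (Submodule.mem_sup_right hs), by abel⟩
  ext a b
  obtain ⟨c1, m1, hm1, rfl⟩ := hdecV a
  obtain ⟨c2, m2, hm2, rfl⟩ := hdecV b
  have u3 : μ m1 one = m1 := by rw [hμcomm]; exact hμone m1
  have u4 : ν m1 one = m1 := by rw [hνcomm]; exact hνone m1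
  simp [map_add, map_smul, LinearMap.add_apply, LinearMap.smul_apply,
    hμone, hνone, u3, u4, hMM m1 hm1 m2 hm2]
end

section
/- Assume the standing algebra setup. If the bilinear form Q̃2 is non-degenerate on H, then b0·m = 0; in particular b0·h = 0 for all h ∈ H and b0² = 0. -/
/-- In the standing algebra setup, if the bilinear form
`Q̃₂(a,b) = -(1/2)·y0(ab)` is non-degenerate on `H`, then `b0·m = 0`; in particular
`b0·h = 0` for all `h ∈ H` and `b0² = 0`. -/
theorem stmt12 (K : Type) [Field K] [CharZero K]
    (R : Type) [CommRing R] [Algebra K R] [IsLocalRing R] [Module.Finite K R]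
    (H : Submodule K R)
    (hHm : H ≤ Submodule.restrictScalars K (IsLocalRing.maximalIdeal R))
    (b0 : R) (hb0 : b0 ∈ IsLocalRing.maximalIdeal R ^ 3)
    (hspan : Submodule.span K {(1 : R)} ⊔ H ⊔ Submodule.span K {b0} = ⊤)
    (hindep : ∀ (c d : K) (h : R), h ∈ H → c • (1 : R) + h + d • b0 = 0 →
      c = 0 ∧ h = 0 ∧ d = 0)
    (y0 : R →ₗ[K] K) (hy0b0 : y0 b0 = 1) (hy0one : y0 1 = 0) (hy0H : ∀ h ∈ H, y0 h = 0)
    (hy0m4 : ∀ x ∈ IsLocalRing.maximalIdeal R ^ 4, y0 x = 0)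
    (hnd : ∀ a ∈ H, (∀ b ∈ H, -(1 / 2 : K) * y0 (a * b) = 0) → a = 0) :
    (∀ x ∈ IsLocalRing.maximalIdeal R, b0 * x = 0) ∧
    (∀ h ∈ H, b0 * h = 0) ∧ b0 * b0 = 0 := by
  have hb0m : b0 ∈ IsLocalRing.maximalIdeal R :=
    Ideal.pow_le_self (by norm_num) hb0
  have key : ∀ x ∈ IsLocalRing.maximalIdeal R, b0 * x = 0 := by
    intro x hx
    have hb0x4 : b0 * x ∈ IsLocalRing.maximalIdeal R ^ 4 := by
      have := Ideal.mul_mem_mul hb0 hx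
      rwa [← pow_succ] at this
    obtain ⟨c, h, d, hh, hdecomp⟩ :
        ∃ c h d, h ∈ H ∧ b0 * x = c • (1 : R) + h + d • b0 := by
      have hmem : b0 * x ∈ Submodule.span K {(1 : R)} ⊔ H ⊔ Submodule.span K {b0} := by
        rw [hspan]; exact Submodule.mem_top
      obtain ⟨p, hp, q, hq, hpq⟩ := Submodule.mem_sup.mp hmem
      obtain ⟨p1, hp1, p2, hp2, hp12⟩ := Submodule.mem_sup.mp hp
      obtain ⟨c, hc⟩ := Submodule.mem_span_singleton.mp hp1
      obtain ⟨d, hd⟩ := Submodule.mem_span_singleton.mp hq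
      exact ⟨c, p2, d, hp2, by rw [← hpq, ← hp12, ← hc, ← hd]⟩
    -- c = 0
    have hc0 : c = 0 := by
      by_contra hc
      have hcm : c • (1 : R) ∈ Submodule.restrictScalars K (IsLocalRing.maximalIdeal R) := by
        have h1 : c • (1 : R) = b0 * x - h - d • b0 := by
          rw [hdecomp]; ring
        rw [h1]
        exact Submodule.sub_mem _
          (Submodule.sub_mem _ (Ideal.mul_mem_right x _ hb0m) (hHm hh))
          (Submodule.smul_mem _ d hb0m)
      have h1m : (1 : R) ∈ IsLocalRing.maximalIdeal R := by
        have := Submodule.smul_mem _ c⁻¹ hcm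
        rwa [smul_smul, inv_mul_cancel₀ hc, one_smul] at this
      exact (Ideal.ne_top_iff_one _).mp (Ideal.IsMaximal.ne_top inferInstance) h1m
    -- d = 0
    have hd0 : d = 0 := by
      have hy : y0 (b0 * x) = d := by
        rw [hdecomp, map_add, map_add, map_smul, map_smul, hy0one, hy0b0,
          hy0H h hh, hc0]
        simp
      rw [hy0m4 _ hb0x4] at hy
      exact hy.symm
    have hbx : b0 * x = h := by
      rw [hdecomp, hc0, hd0]; simp
    have hh0 : h = 0 := by
      apply hnd h hh
      intro b hb
      have : h * b ∈ IsLocalRing.maximalIdeal R ^ 4 := by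
        rw [← hbx]
        exact Ideal.mul_mem_right b _ hb0x4
      rw [hy0m4 _ this, mul_zero]
    rw [hbx, hh0]
  exact ⟨key, fun h hh => key h (hHm hh), key b0 hb0m⟩
end
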